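/- arXiv:2102.05698 — 4 statements merged into one kernel-verified Lean document; each statement's English description precedes it below -/
import Mathlib

section
/- Let α ∈ ℝ with α > 0 and let {c_k} be a sequence of positive reals. If the series ∑_{k=1}^∞ c_k·sin(k^α x) converges uniformly on some interval (0, a) with a > 0, and c_k ≤ A·c_l for all k ≥ l, then c_k·k → 0 as k → ∞. -/
open Real Filter Finset

set_option maxHeartbeats 1000000 in
theorem stmt12 (α : ℝ) (hα : 0 < α) (c : ℕ → ℝ) (A a : ℝ) (hA : 0 < A) (ha : 0 < a)
    (hc : ∀ k, 0 < c k) (hcm : ∀ k l, l ≤ k → c k ≤ A * c l)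
    (f : ℝ → ℝ)
    (hunif : TendstoUniformlyOn
      (fun N x => ∑ k ∈ Finset.Icc 1 N, c k * Real.sin ((k : ℝ) ^ α * x))
      f Filter.atTop (Set.Ioo 0 a)) :
    Filter.Tendsto (fun k => c k * (k : ℝ)) Filter.atTop (nhds 0) := by
  have hA1 : 1 ≤ A := by
    have h := hcm 0 0 le_rfl
    nlinarith [hc 0]
  set t0 : ℝ := (π / 2) * (1/2 : ℝ) ^ α with ht0def
  have hhalf : (0:ℝ) < (1/2 : ℝ) ^ α := Real.rpow_pos_of_pos (by norm_num) α
  have hhalf1 : (1/2 : ℝ) ^ α ≤ 1 := Real.rpow_le_one (by norm_num) (by norm_num) hα.le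
  have ht0pos : 0 < t0 := by positivity
  have ht0le : t0 ≤ π / 2 := by
    have := Real.pi_pos
    nlinarith
  set δ : ℝ := Real.sin t0 with hδdef
  have hδpos : 0 < δ := Real.sin_pos_of_pos_of_lt_pi ht0pos (by linarith [Real.pi_pos])
  -- uniform Cauchy
  have hcauchy := hunif.uniformCauchySeqOn
  rw [Metric.uniformCauchySeqOn_iff] at hcauchy
  rw [Metric.tendsto_atTop]
  intro ε hε
  obtain ⟨N1, hN1⟩ := hcauchy (δ * ε / (16 * A ^ 2)) (by positivity)
  -- x_n := (π/2) / (2n)^α  tends to 0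
  have hx0 : Tendsto (fun n : ℕ => (π / 2) / (2 * (n:ℝ)) ^ α) atTop (nhds 0) := by
    refine Tendsto.div_atTop tendsto_const_nhds ?_
    exact (tendsto_rpow_atTop hα).comp
      ((tendsto_natCast_atTop_atTop (R := ℝ)).const_mul_atTop two_pos)
  obtain ⟨N2, hN2⟩ := (Metric.tendsto_atTop.mp hx0) a ha
  set M := max N1 N2 + 1 with hMdef
  have key : ∀ n, M ≤ n → c (2 * n) * (2 * (n:ℝ)) < ε / (4 * A) := by
    intro n hn
    have hn1 : 1 ≤ n := le_trans (by omega) hn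
    have hnN1 : N1 ≤ n := le_trans (by omega) hn
    have hnN2 : N2 ≤ n := le_trans (by omega) hn
    have h2npos : (0:ℝ) < 2 * (n:ℝ) := by
      have : (1:ℝ) ≤ (n:ℝ) := by exact_mod_cast hn1
      linarith
    set x : ℝ := (π / 2) / (2 * (n:ℝ)) ^ α with hxdef
    have hrp : (0:ℝ) < (2 * (n:ℝ)) ^ α := Real.rpow_pos_of_pos h2npos α
    have hxpos : 0 < x := by positivity
    have hxa : x < a := by
      have := hN2 n hnN2
      rwa [Real.dist_eq, sub_zero, abs_of_pos hxpos] at this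
    have hxmem : x ∈ Set.Ioo 0 a := ⟨hxpos, hxa⟩
    -- bound each term of the block sum
    have hterm : ∀ k ∈ Finset.Ioc n (2 * n),
        c (2 * n) / A * δ ≤ c k * Real.sin ((k:ℝ) ^ α * x) := by
      intro k hk
      rw [Finset.mem_Ioc] at hk
      have hkn : n < k := hk.1
      have hk2n : k ≤ 2 * n := hk.2
      have hknR : (n:ℝ) ≤ (k:ℝ) := by exact_mod_cast hkn.le
      have hk2nR : (k:ℝ) ≤ 2 * (n:ℝ) := by exact_mod_cast hk2n
      have hkpos : (0:ℝ) ≤ (k:ℝ) := Nat.cast_nonneg k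
      set t : ℝ := (k:ℝ) ^ α * x with htdef
      have htub : t ≤ π / 2 := by
        have h1 : (k:ℝ) ^ α ≤ (2 * (n:ℝ)) ^ α := Real.rpow_le_rpow hkpos hk2nR hα.le
        have : t = (k:ℝ) ^ α * (π / 2) / (2 * (n:ℝ)) ^ α := by
          rw [htdef, hxdef]; ring
        rw [this, div_le_iff₀ hrp]
        nlinarith [Real.pi_pos, Real.rpow_nonneg hkpos α]
      have htlb : t0 ≤ t := by
        have h1 : (n:ℝ) ^ α ≤ (k:ℝ) ^ α :=
          Real.rpow_le_rpow (Nat.cast_nonneg n) hknR hα.le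
        have h2 : (1/2 : ℝ) ^ α * (2 * (n:ℝ)) ^ α = (n:ℝ) ^ α := by
          rw [← Real.mul_rpow (by norm_num) h2npos.le]
          congr 1; ring
        have : t = (k:ℝ) ^ α * (π / 2) / (2 * (n:ℝ)) ^ α := by
          rw [htdef, hxdef]; ring
        rw [this, le_div_iff₀ hrp, ht0def]
        nlinarith [Real.pi_pos]
      have hsin : δ ≤ Real.sin t := by
        have hm1 : t0 ∈ Set.Icc (-(π/2)) (π/2) := ⟨by linarith, ht0le⟩
        have hm2 : t ∈ Set.Icc (-(π/2)) (π/2) := ⟨by linarith, htub⟩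
        exact Real.strictMonoOn_sin.monotoneOn hm1 hm2 htlb
      have hck : c (2 * n) / A ≤ c k := by
        have := hcm (2 * n) k hk2n
        rw [div_le_iff₀ hA]
        linarith
      have hsinpos : 0 ≤ Real.sin t := le_trans hδpos.le hsin
      calc c (2 * n) / A * δ ≤ c k * δ := by
            apply mul_le_mul_of_nonneg_right hck hδpos.le
        _ ≤ c k * Real.sin t := by
            apply mul_le_mul_of_nonneg_left hsin (hc k).le
    -- the block sum
    have hsum : (n : ℝ) * (c (2 * n) / A * δ) ≤
        ∑ k ∈ Finset.Ioc n (2 * n), c k * Real.sin ((k:ℝ) ^ α * x) := by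
      have := Finset.sum_le_sum hterm
      rwa [Finset.sum_const, Nat.card_Ioc, nsmul_eq_mul,
        show 2 * n - n = n by omega] at this
    -- compare with Cauchy bound
    have hdist := hN1 (2 * n) (le_trans hnN1 (by omega)) n hnN1 x hxmem
    have hdiff : (∑ k ∈ Finset.Icc 1 (2*n), c k * Real.sin ((k:ℝ) ^ α * x))
        - (∑ k ∈ Finset.Icc 1 n, c k * Real.sin ((k:ℝ) ^ α * x))
        = ∑ k ∈ Finset.Ioc n (2*n), c k * Real.sin ((k:ℝ) ^ α * x) := by
      have h0 : ∀ m : ℕ, Finset.Icc 1 m = Finset.Ioc 0 m := fun m => Finset.Icc_add_one_left_eq_Ioc 0 m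
      rw [h0, h0, ← Finset.sum_Ioc_consecutive _ (Nat.zero_le n) (by omega)]
      ring
    rw [Real.dist_eq, hdiff] at hdist
    have habs : ∑ k ∈ Finset.Ioc n (2*n), c k * Real.sin ((k:ℝ) ^ α * x)
        ≤ |∑ k ∈ Finset.Ioc n (2*n), c k * Real.sin ((k:ℝ) ^ α * x)| := le_abs_self _
    have hnc : (n : ℝ) * (c (2 * n) / A * δ) < δ * ε / (16 * A ^ 2) := by
      linarith
    have hnpos : (0:ℝ) < (n:ℝ) := by exact_mod_cast hn1
    -- conclude
    have hnc' := (lt_div_iff₀ (by positivity : (0:ℝ) < 16 * A ^ 2)).mp hnc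
    have heq : (n:ℝ) * (c (2*n) / A * δ) * (16 * A ^ 2) =
        16 * ((n:ℝ) * c (2*n)) * δ * A := by
      field_simp
    rw [heq] at hnc'
    rw [lt_div_iff₀ (by positivity : (0:ℝ) < 4 * A)]
    nlinarith [mul_pos (mul_pos hnpos (hc (2*n))) hA, hδpos]
  -- final
  refine ⟨2 * M + 1, fun k hk => ?_⟩
  have hkpos : 0 < k := by omega
  have hkR : (0:ℝ) < (k:ℝ) := by exact_mod_cast hkpos
  rw [Real.dist_eq, sub_zero, abs_of_pos (mul_pos (hc k) hkR)]
  have hdivle : ε / (4*A) ≤ ε := div_le_self hε.le (by linarith)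
  rcases Nat.even_or_odd k with ⟨n, hn⟩ | ⟨n, hn⟩
  · -- k = 2n
    have hn' : k = 2 * n := by omega
    have hnM : M ≤ n := by omega
    have h := key n hnM
    have heq : c k * (k:ℝ) = c (2*n) * (2 * (n:ℝ)) := by
      rw [hn']; push_cast; ring
    rw [heq]
    calc c (2*n) * (2*(n:ℝ)) < ε / (4*A) := h
      _ ≤ ε := hdivle
  · -- k = 2n+1
    have hnM : M ≤ n := by omega
    have hn1 : 1 ≤ n := by omega
    have h := key n hnM
    have hck : c k ≤ A * c (2*n) := by
      rw [hn]; exact hcm (2*n+1) (2*n) (by omega)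
    have hkR : (k:ℝ) ≤ 2 * (2 * (n:ℝ)) := by
      have h4 : (k:ℝ) ≤ ((2*(2*n) : ℕ) : ℝ) := Nat.cast_le.mpr (by omega)
      push_cast at h4; linarith
    have h2n : (0:ℝ) < 2 * (n:ℝ) := by
      have : (1:ℝ) ≤ (n:ℝ) := by exact_mod_cast hn1
      linarith
    calc c k * (k:ℝ) ≤ (A * c (2*n)) * (2 * (2 * (n:ℝ))) := by
          apply mul_le_mul hck hkR (Nat.cast_nonneg k)
          exact mul_nonneg hA.le (hc _).le
      _ = 2 * A * (c (2*n) * (2 * (n:ℝ))) := by ring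
      _ < 2 * A * (ε / (4*A)) := by
          apply mul_lt_mul_of_pos_left h (by positivity)
      _ ≤ ε := by
          have : 2 * A * (ε / (4*A)) = ε / 2 := by field_simp; ring
          rw [this]; linarith
end

section
/- Let α = u/v with u, v positive integers, v ∤ u (so α is rational but not an integer). Then the real numbers n₁^α, …, n_ν^α, where n₁, …, n_ν are distinct square-free positive integers, are linearly independent over ℚ. -/
open Polynomial

/-- A positive real whose `v`-th power is rational has minimal polynomial `X^d - C c`. -/
lemma minpoly_eq_X_pow_sub_C {t : ℝ} (ht : 0 < t) {v : ℕ} (hv : 0 < v) {q : ℚ}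
    (hq : t ^ v = (q : ℝ)) :
    ∃ c : ℚ, (t : ℝ) ^ (minpoly ℚ t).natDegree = (c : ℝ) ∧
      minpoly ℚ t = X ^ (minpoly ℚ t).natDegree - C c := by
  have hqpos : (0:ℝ) < (q:ℝ) := hq ▸ (by positivity)
  have hint : IsIntegral ℚ t := by
    refine ⟨X ^ v - C q, monic_X_pow_sub_C q hv.ne', ?_⟩
    simp [hq]
  set P := minpoly ℚ t with hPdef
  have hPmon : P.Monic := minpoly.monic hint
  set d := P.natDegree with hd
  have hdpos : 0 < d := minpoly.natDegree_pos hint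
  have hdvd : P ∣ X ^ v - C q := minpoly.dvd ℚ t (by simp [hq])
  -- complex roots
  set Q := P.map (algebraMap ℚ ℂ) with hQ
  have hQmon : Q.Monic := hPmon.map _
  have hQsplits : Q.Splits := IsAlgClosed.splits _
  have hcard : Q.roots.card = d := by
    rw [splits_iff_card_roots.mp hQsplits, hQ, natDegree_map]
  have habs : ∀ z ∈ Q.roots, ‖z‖ = t := by
    intro z hz
    have hz' : eval z Q = 0 := by
      have := (mem_roots_iff_aeval_eq_zero (hQmon.ne_zero)).mp hz
      simpa [aeval_def] using this
    have hzv : z ^ v = (q : ℂ) := by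
      obtain ⟨g, hg⟩ := hdvd
      have h2 : eval z ((X ^ v - C q : ℚ[X]).map (algebraMap ℚ ℂ)) = 0 := by
        rw [hg, Polynomial.map_mul, eval_mul, ← hQ, hz', zero_mul]
      simp only [Polynomial.map_sub, Polynomial.map_pow, map_X, map_C, eval_sub, eval_pow,
        eval_X, eval_C, sub_eq_zero] at h2
      rw [h2]; norm_num
    have habs' : ‖z‖ ^ v = t ^ v := by
      rw [← norm_pow, hzv]
      have : ((q:ℂ)) = ((q:ℝ):ℂ) := by push_cast; ring
      rw [this, Complex.norm_real, Real.norm_eq_abs, abs_of_pos hqpos, hq]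
    exact (pow_left_inj₀ (norm_nonneg z) ht.le hv.ne').mp habs'
  -- product of roots
  have hprod : ‖Q.roots.prod‖ = t ^ d := by
    have h1 : ‖Q.roots.prod‖ = (Q.roots.map (‖·‖)).prod :=
      (map_multiset_prod (normHom : ℂ →*₀ ℝ) _)
    have h2 : Q.roots.map (‖·‖) = Multiset.replicate d t := by
      rw [Multiset.eq_replicate]
      constructor
      · simpa using hcard
      · intro x hx
        rcases Multiset.mem_map.mp hx with ⟨w, hw, rfl⟩; exact habs w hw
    rw [h1, h2, Multiset.prod_replicate]
  have hcoeff : ‖Q.coeff 0‖ = t ^ d := by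
    rw [show Q.coeff 0 = (-1) ^ Q.natDegree * Q.roots.prod from
      hQsplits.coeff_zero_eq_prod_roots_of_monic hQmon]
    rw [norm_mul, norm_pow]
    simp [hprod]
  have hQc : Q.coeff 0 = ((P.coeff 0 : ℚ) : ℂ) := by simp [hQ, coeff_map]
  have hcoeff' : t ^ d = ((|P.coeff 0| : ℚ) : ℝ) := by
    rw [hQc] at hcoeff
    have : ((P.coeff 0 : ℚ) : ℂ) = (((P.coeff 0 : ℚ) : ℝ) : ℂ) := by push_cast; ring
    rw [this, Complex.norm_real, Real.norm_eq_abs] at hcoeff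
    rw [← hcoeff]; push_cast; ring
  refine ⟨|P.coeff 0|, hcoeff', ?_⟩
  · have hc : t ^ d = ((|P.coeff 0| : ℚ) : ℝ) := hcoeff'
    have hdvd2 : P ∣ X ^ d - C |P.coeff 0| := minpoly.dvd ℚ t (by simp [hc])
    have hmon2 : (X ^ d - C |P.coeff 0| : ℚ[X]).Monic := monic_X_pow_sub_C _ hdpos.ne'
    have hdeg2 : (X ^ d - C |P.coeff 0| : ℚ[X]).natDegree = d := natDegree_X_pow_sub_C
    exact (Polynomial.eq_of_monic_of_dvd_of_natDegree_le hPmon hmon2 hdvd2 (le_of_eq hdeg2)).symm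

lemma trace_eq_zero_of_irrational (K : IntermediateField ℚ ℝ) [FiniteDimensional ℚ K]
    (t : K) (ht : 0 < (t : ℝ)) {v : ℕ} (hv : 0 < v) {q : ℚ} (hq : ((t : ℝ)) ^ v = (q : ℝ))
    (hirr : Irrational (t : ℝ)) : Algebra.trace ℚ K t = 0 := by
  have hinj : Function.Injective (algebraMap K ℝ) := (algebraMap K ℝ).injective
  have hmp : minpoly ℚ t = minpoly ℚ ((t : ℝ)) := by
    rw [← minpoly.algebraMap_eq hinj t]; rfl
  obtain ⟨c, hc, hP⟩ := minpoly_eq_X_pow_sub_C ht hv hq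
  set d := (minpoly ℚ ((t:ℝ))).natDegree with hd
  have hint : IsIntegral ℚ ((t:ℝ)) := by
    refine ⟨Polynomial.X ^ v - Polynomial.C q, Polynomial.monic_X_pow_sub_C q hv.ne', ?_⟩
    simp [hq]
  have hd2 : 2 ≤ d := by
    rcases Nat.lt_or_ge d 2 with h | h
    · interval_cases d
      · exact absurd (hd ▸ rfl) (minpoly.natDegree_pos hint).ne
      · exact absurd ((minpoly.natDegree_eq_one_iff).mp hd.symm) (by
          rintro ⟨x, hx⟩
          exact hirr ⟨x, (eq_ratCast (algebraMap ℚ ℝ) x) ▸ hx⟩)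
    · exact h
  -- nextCoeff of minpoly is 0
  have hnext : (minpoly ℚ ((t:ℝ))).nextCoeff = 0 := by
    rw [hP, Polynomial.nextCoeff_of_natDegree_pos (by
      rw [Polynomial.natDegree_X_pow_sub_C]; omega)]
    rw [Polynomial.natDegree_X_pow_sub_C, Polynomial.coeff_sub, Polynomial.coeff_X_pow,
      Polynomial.coeff_C]
    have h1 : ¬ (d - 1 = d) := by omega
    have h2 : ¬ (d - 1 = 0) := by omega
    simp [h1, h2]
  have hsplits : ((minpoly ℚ t).map (algebraMap ℚ ℂ)).Splits := IsAlgClosed.splits _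
  have := trace_eq_sum_roots (K := ℚ) (L := K) (F := ℂ) (x := t) hsplits
  have hsum : ((minpoly ℚ t).aroots ℂ).sum = 0 := by
    have hmon : ((minpoly ℚ t).map (algebraMap ℚ ℂ)).Monic :=
      (hmp ▸ minpoly.monic hint).map _
    have hsp2 : ((minpoly ℚ t).map (algebraMap ℚ ℂ)).Splits :=
      IsAlgClosed.splits _
    have := hsp2.nextCoeff_eq_neg_sum_roots_of_monic hmon
    rw [Polynomial.aroots_def]
    have hnext2 : ((minpoly ℚ t).map (algebraMap ℚ ℂ)).nextCoeff = 0 := by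
      rw [Polynomial.nextCoeff_map (algebraMap ℚ ℂ).injective, hmp, hnext, map_zero]
    rw [hnext2] at this
    exact neg_eq_zero.mp this.symm
  rw [hsum, smul_zero] at this
  exact (map_eq_zero_iff _ (algebraMap ℚ ℂ).injective).mp this

lemma aux_val {u v : ℕ} (hu : 0 < u) (hv : 0 < v) {a b : ℕ} (ha : Squarefree a)
    (hb : Squarefree b) {p : ℕ} (hp : p.Prime) (hpa : p ∣ a) (hpb : ¬ p ∣ b)
    {q : ℚ} (hq : q ^ v * (b : ℚ) ^ u = (a : ℚ) ^ u) : v ∣ u := by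
  haveI : Fact p.Prime := ⟨hp⟩
  have ha0 : a ≠ 0 := ha.ne_zero
  have hb0 : b ≠ 0 := hb.ne_zero
  have hq0 : q ≠ 0 := by
    intro h
    have h2 : (a : ℚ) ^ u = 0 := by rw [← hq, h, zero_pow hv.ne', zero_mul]
    have h3 : (a : ℚ) = 0 := pow_eq_zero_iff hu.ne' |>.mp h2
    exact ha0 (by exact_mod_cast h3)
  have hva : padicValNat p a = 1 := by
    have h1 : 0 < a.factorization p := Nat.Prime.factorization_pos_of_dvd hp ha0 hpa
    have h2 : a.factorization p ≤ 1 := ha.natFactorization_le_one p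
    have : a.factorization p = 1 := le_antisymm h2 h1
    rwa [Nat.factorization_def a hp] at this
  have hvb : padicValNat p b = 0 := padicValNat.eq_zero_of_not_dvd hpb
  have hL : padicValRat p (q ^ v * (b : ℚ) ^ u) = v * padicValRat p q + u * (padicValNat p b : ℤ) := by
    rw [padicValRat.mul (pow_ne_zero _ hq0) (by positivity), padicValRat.pow q,
      padicValRat.pow (b : ℚ)]
    rw [padicValRat.of_nat]
  have hR : padicValRat p ((a : ℚ) ^ u) = u * (padicValNat p a : ℤ) := by
    rw [padicValRat.pow (a : ℚ), padicValRat.of_nat]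
  rw [hq] at hL
  rw [hR, hva, hvb] at hL
  have : (v : ℤ) * padicValRat p q = u := by push_cast at hL ⊢; linarith
  have : (v : ℤ) ∣ (u : ℤ) := ⟨padicValRat p q, this.symm⟩
  exact_mod_cast this

lemma ratio_not_rat {u v : ℕ} (hu : 0 < u) (hv : 0 < v) (hvu : ¬ v ∣ u) {a b : ℕ}
    (ha : Squarefree a) (hb : Squarefree b) (hab : a ≠ b)
    {q : ℚ} (hq : q ^ v * (b : ℚ) ^ u = (a : ℚ) ^ u) : False := by
  have ha0 : a ≠ 0 := ha.ne_zero
  have hb0 : b ≠ 0 := hb.ne_zero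
  have hq0 : q ≠ 0 := by
    intro h
    have h2 : (a : ℚ) ^ u = 0 := by rw [← hq, h, zero_pow hv.ne', zero_mul]
    have h3 : (a : ℚ) = 0 := pow_eq_zero_iff hu.ne' |>.mp h2
    exact ha0 (by exact_mod_cast h3)
  have hne : a.primeFactors ≠ b.primeFactors := by
    intro h
    apply hab
    rw [← Nat.prod_primeFactors_of_squarefree ha, ← Nat.prod_primeFactors_of_squarefree hb, h]
  have hex : ∃ p : ℕ, p.Prime ∧ ((p ∣ a ∧ ¬ p ∣ b) ∨ (p ∣ b ∧ ¬ p ∣ a)) := by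
    by_contra h
    push_neg at h
    apply hne
    ext p
    simp only [Nat.mem_primeFactors]
    constructor
    · rintro ⟨hp, hpa, -⟩
      exact ⟨hp, (h p hp).1 hpa, hb0⟩
    · rintro ⟨hp, hpb, -⟩
      exact ⟨hp, (h p hp).2 hpb, ha0⟩
  rcases hex with ⟨p, hp, ⟨hpa, hpb⟩ | ⟨hpb, hpa⟩⟩
  · exact hvu (aux_val hu hv ha hb hp hpa hpb hq)
  · refine hvu (aux_val hu hv hb ha hp hpb hpa (q := q⁻¹) ?_)
    rw [inv_pow, ← hq]
    field_simp

theorem stmt13 (u v : ℕ) (hu : 0 < u) (hv : 0 < v) (hvu : ¬ v ∣ u)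
    (ν : ℕ) (n : Fin ν → ℕ) (hinj : Function.Injective n)
    (hsf : ∀ i, Squarefree (n i)) (hpos : ∀ i, 0 < n i) :
    LinearIndependent ℚ (fun i : Fin ν => ((n i : ℝ) ^ ((u : ℝ) / v))) := by
  set α : ℝ := (u : ℝ) / v with hα
  set x : Fin ν → ℝ := fun i => (n i : ℝ) ^ α with hxdef
  have hnpos : ∀ i, (0:ℝ) < (n i : ℝ) := fun i => by exact_mod_cast hpos i
  have hxpos : ∀ i, 0 < x i := fun i => Real.rpow_pos_of_pos (hnpos i) _
  have hxpow : ∀ i, x i ^ v = ((n i : ℝ)) ^ u := by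
    intro i
    rw [hxdef]
    rw [← Real.rpow_natCast ((n i : ℝ) ^ α) v, ← Real.rpow_mul (hnpos i).le]
    rw [hα, div_mul_cancel₀ _ (by exact_mod_cast hv.ne' : (v:ℝ) ≠ 0), Real.rpow_natCast]
  have hint : ∀ i, IsIntegral ℚ (x i) := by
    intro i
    refine ⟨Polynomial.X ^ v - Polynomial.C ((n i : ℚ) ^ u), Polynomial.monic_X_pow_sub_C _ hv.ne', ?_⟩
    simp [hxpow i]
  set K := IntermediateField.adjoin ℚ (Set.range x) with hK
  haveI : FiniteDimensional ℚ K :=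
    IntermediateField.finiteDimensional_adjoin (fun y hy => by
      rcases hy with ⟨i, rfl⟩; exact hint i)
  have hmem : ∀ i, x i ∈ K := fun i => IntermediateField.subset_adjoin ℚ _ ⟨i, rfl⟩
  rw [Fintype.linearIndependent_iff]
  intro g hg j
  set X : Fin ν → K := fun i => ⟨x i, hmem i⟩ with hX
  set y : Fin ν → K := fun i => X i * (X j)⁻¹ with hy
  have hXj0 : X j ≠ 0 := by
    intro h
    have : x j = 0 := congrArg Subtype.val h
    exact (hxpos j).ne' this
  have hycoe : ∀ i, ((y i : K) : ℝ) = x i * (x j)⁻¹ := by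
    intro i
    rw [hy]
    push_cast [map_mul, map_inv₀]
    rfl
  have hsum : ∑ i, g i • y i = 0 := by
    apply (algebraMap K ℝ).injective
    rw [map_sum, map_zero]
    have : ∀ i, algebraMap K ℝ (g i • y i) = (g i : ℝ) * (x i * (x j)⁻¹) := by
      intro i
      rw [Algebra.smul_def, map_mul, ← IsScalarTower.algebraMap_apply, eq_ratCast]
      rw [show (algebraMap K ℝ) (y i) = ((y i : K) : ℝ) from rfl, hycoe i]
    rw [Finset.sum_congr rfl (fun i _ => this i)]
    have : ∑ i, (g i : ℝ) * (x i * (x j)⁻¹) = (∑ i, (g i : ℝ) * x i) * (x j)⁻¹ := by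
      rw [Finset.sum_mul]; congr 1; ext i; ring
    rw [this]
    have hg' : ∑ i, (g i : ℝ) * x i = 0 := by
      have := hg
      simpa [Rat.smul_def] using this
    rw [hg', zero_mul]
  have htr := congrArg (Algebra.trace ℚ K) hsum
  rw [map_sum, map_zero] at htr
  have htr' : ∀ i, Algebra.trace ℚ K (g i • y i) = g i • Algebra.trace ℚ K (y i) :=
    fun i => map_smul _ _ _
  rw [Finset.sum_congr rfl (fun i _ => htr' i)] at htr
  -- trace of y i for i ≠ j is zero
  have hzero : ∀ i, i ≠ j → Algebra.trace ℚ K (y i) = 0 := by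
    intro i hij
    have hpos' : 0 < ((y i : K) : ℝ) := by
      rw [hycoe i]; exact mul_pos (hxpos i) (inv_pos.mpr (hxpos j))
    have hqpow : (((y i : K) : ℝ)) ^ v = (((n i : ℚ) ^ u / (n j : ℚ) ^ u : ℚ) : ℝ) := by
      rw [hycoe i, mul_pow, inv_pow, hxpow i, hxpow j]
      push_cast
      rw [div_eq_mul_inv]
    have hirr : Irrational ((y i : K) : ℝ) := by
      rintro ⟨r, hr⟩
      have hrv : (r : ℝ) ^ v = (((n i : ℚ) ^ u / (n j : ℚ) ^ u : ℚ) : ℝ) := by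
        rw [hr]; exact hqpow
      have hrq : r ^ v = (n i : ℚ) ^ u / (n j : ℚ) ^ u := by
        exact_mod_cast hrv
      have hne : n i ≠ n j := fun h => hij (hinj h)
      refine ratio_not_rat hu hv hvu (hsf i) (hsf j) hne (q := r) ?_
      rw [hrq]
      rw [div_mul_cancel₀ _ (pow_ne_zero _ (by exact_mod_cast (hpos j).ne' : (n j : ℚ) ≠ 0))]
    exact trace_eq_zero_of_irrational K (y i) hpos' hv hqpow hirr
  have hyj : y j = 1 := mul_inv_cancel₀ hXj0
  have htrj : Algebra.trace ℚ K (y j) = (Module.finrank ℚ K : ℚ) := by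
    rw [hyj, show (1 : K) = algebraMap ℚ K 1 from (map_one _).symm, Algebra.trace_algebraMap]
    simp
  rw [Finset.sum_eq_single j (fun i _ hij => by rw [hzero i hij, smul_zero])
    (fun h => absurd (Finset.mem_univ j) h)] at htr
  rw [htrj] at htr
  have hfr : (0:ℚ) < (Module.finrank ℚ K : ℚ) := by
    exact_mod_cast Module.finrank_pos
  have : g j * (Module.finrank ℚ K : ℚ) = 0 := by
    rw [← smul_eq_mul]; exact htr
  rcases mul_eq_zero.mp this with h | h
  · exact h
  · exact absurd h hfr.ne'
end

section
/- Let (1, α₁, …, α_ν) be a vector of real numbers linearly independent over ℚ. Then for every δ ∈ (0, 1/2) and every β₁, …, β_ν ∈ ℝ there are infinitely many integers x such that ‖x·α_j + β_j‖ < δ for all j = 1, …, ν, where ‖a‖ denotes the distance from a to the nearest integer. -/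
open MeasureTheory AddCircle Set Function

noncomputable section
namespace Kron
notation "𝕋" => AddCircle (1:ℝ)
variable {ν : ℕ}

lemma haar_eq_vol : (haarAddCircle : Measure 𝕋) = volume := by
  rw [volume_eq_smul_haarAddCircle]; simp

/-- complex-valued character on the circle -/
def e (z : 𝕋) : ℂ := toCircle z

lemma e_add (z w : 𝕋) : e (z + w) = e z * e w := by
  simp [e, toCircle_add]

lemma e_zero : e 0 = 1 := fourier_zero' (T := 1)

lemma e_eq_one_iff {z : 𝕋} : e z = 1 ↔ z = 0 := by
  constructor
  · intro h
    have : toCircle z = toCircle (0 : 𝕋) := by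
      have h0 : e (0:𝕋) = 1 := e_zero
      exact Subtype.coe_injective (by rw [← h0] at h; exact_mod_cast h)
    exact injective_toCircle one_ne_zero this
  · rintro rfl; exact e_zero

lemma e_sum {s : Finset (Fin ν)} (f : Fin ν → 𝕋) :
    e (∑ j ∈ s, f j) = ∏ j ∈ s, e (f j) := by
  classical
  induction s using Finset.induction with
  | empty => simp [e_zero]
  | insert _ _ h ih => rw [Finset.sum_insert h, Finset.prod_insert h, e_add, ih]

lemma fourier_eq_e (n : ℤ) (z : 𝕋) : fourier n z = e (n • z) := by
  rw [fourier_apply]; rfl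

/-- multivariate character -/
def chi (m : Fin ν → ℤ) : C(Fin ν → 𝕋, ℂ) :=
  ∏ j, (fourier (m j)).comp ⟨fun x => x j, continuous_apply j⟩

lemma chi_apply (m : Fin ν → ℤ) (x : Fin ν → 𝕋) :
    chi m x = ∏ j, fourier (m j) (x j) := by
  simp [chi]

lemma chi_apply_e (m : Fin ν → ℤ) (x : Fin ν → 𝕋) :
    chi m x = e (∑ j, m j • x j) := by
  rw [chi_apply, e_sum]
  exact Finset.prod_congr rfl fun j _ => fourier_eq_e _ _

lemma chi_add_apply (m : Fin ν → ℤ) (x y : Fin ν → 𝕋) :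
    chi m (x + y) = chi m x * chi m y := by
  simp_rw [chi_apply_e]
  rw [← e_add, ← Finset.sum_add_distrib]
  congr 1; apply Finset.sum_congr rfl; intro j _
  simp [smul_add]

lemma chi_zero : (chi (0 : Fin ν → ℤ)) = 1 := by
  ext x; simp [chi_apply_e, e_zero]

lemma chi_mul (m m' : Fin ν → ℤ) : chi m * chi m' = chi (m + m') := by
  ext x
  simp only [ContinuousMap.mul_apply, chi_apply_e]
  rw [← e_add, ← Finset.sum_add_distrib]
  congr 1; apply Finset.sum_congr rfl; intro j _
  simp [add_smul]

lemma chi_star (m : Fin ν → ℤ) : star (chi m) = chi (-m) := by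
  ext x
  simp only [ContinuousMap.star_apply, chi_apply]
  rw [star_prod]
  exact Finset.prod_congr rfl fun j _ => by simp [fourier_neg, RCLike.star_def]
lemma chi_coe (m : Fin ν → ℤ) (γ : Fin ν → ℝ) :
    chi m (fun j => ((γ j : ℝ) : 𝕋)) = e (((∑ j, (m j : ℝ) * γ j : ℝ)) : 𝕋) := by
  rw [chi_apply_e]
  congr 1
  have h1 : ((∑ j, (m j : ℝ) * γ j : ℝ) : 𝕋) = ∑ j, (((m j : ℝ) * γ j : ℝ) : 𝕋) :=
    map_sum (QuotientAddGroup.mk' _) _ _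
  rw [h1]
  exact Finset.sum_congr rfl fun j _ => by rw [← zsmul_eq_mul, AddCircle.coe_zsmul]
lemma vol_prob1 : IsProbabilityMeasure (volume : Measure 𝕋) := by
  rw [← haar_eq_vol]; infer_instance

lemma integral_fourier_vol {n : ℤ} (hn : n ≠ 0) : ∫ x : 𝕋, (fourier n) x = 0 := by
  rw [← haar_eq_vol]
  exact integral_eq_zero_of_add_right_eq_neg (μ := haarAddCircle)
    (fourier_add_half_inv_index hn (by norm_num))

lemma integral_chi_vol {m : Fin ν → ℤ} (hm : m ≠ 0) :
    ∫ x : Fin ν → 𝕋, (∏ j, fourier (m j) (x j)) = 0 := by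
  rw [volume_pi, MeasureTheory.integral_fintype_prod_eq_prod (f := fun j (z : 𝕋) => fourier (m j) z)]
  obtain ⟨j, hj⟩ : ∃ j, m j ≠ 0 := by
    by_contra h; push_neg at h; exact hm (funext h)
  exact Finset.prod_eq_zero (Finset.mem_univ j) (integral_fourier_vol hj)
def chiSpan (ν : ℕ) : Submodule ℂ C(Fin ν → 𝕋, ℂ) := Submodule.span ℂ (Set.range (chi (ν := ν)))

lemma chiSpan_mul_mem {f g : C(Fin ν → 𝕋, ℂ)} (hf : f ∈ chiSpan ν) (hg : g ∈ chiSpan ν) :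
    f * g ∈ chiSpan ν := by
  induction hf using Submodule.span_induction with
  | mem f hf =>
    induction hg using Submodule.span_induction with
    | mem g hg =>
      obtain ⟨m, rfl⟩ := hf; obtain ⟨m', rfl⟩ := hg
      exact Submodule.subset_span ⟨m + m', (chi_mul m m').symm⟩
    | zero => simpa using Submodule.zero_mem _
    | add g₁ g₂ _ _ h1 h2 => rw [mul_add]; exact Submodule.add_mem _ h1 h2
    | smul c g _ h => rw [mul_smul_comm]; exact Submodule.smul_mem _ _ h
  | zero => simpa using Submodule.zero_mem _
  | add f₁ f₂ _ _ h1 h2 => rw [add_mul]; exact Submodule.add_mem _ h1 h2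
  | smul c f _ h => rw [smul_mul_assoc]; exact Submodule.smul_mem _ _ h

def chiAlg (ν : ℕ) : StarSubalgebra ℂ C(Fin ν → 𝕋, ℂ) where
  toSubalgebra := (chiSpan ν).toSubalgebra (Submodule.subset_span ⟨0, chi_zero⟩)
    (fun _ _ => chiSpan_mul_mem)
  star_mem' := by
    intro f hf
    induction hf using Submodule.span_induction with
    | mem f hf => obtain ⟨m, rfl⟩ := hf; exact Submodule.subset_span ⟨-m, (chi_star m).symm⟩
    | zero => simpa using Submodule.zero_mem _
    | add f₁ f₂ _ _ h1 h2 => rw [star_add]; exact Submodule.add_mem _ h1 h2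
    | smul c f _ h => rw [star_smul]; exact Submodule.smul_mem _ _ h

lemma chiAlg_separates : (chiAlg ν).SeparatesPoints := by
  intro x y hxy
  obtain ⟨j, hj⟩ : ∃ j, x j ≠ y j := by
    by_contra h; push_neg at h; exact hxy (funext h)
  refine ⟨_, ⟨chi (Pi.single j 1), show _ ∈ chiSpan ν from Submodule.subset_span ⟨_, rfl⟩, rfl⟩, ?_⟩
  have key : ∀ z : Fin ν → 𝕋, chi (Pi.single j 1) z = e (z j) := by
    intro z
    rw [chi_apply]
    rw [Finset.prod_eq_single j (fun i _ hij => by simp [Pi.single_eq_of_ne hij, fourier_zero])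
      (fun h => absurd (Finset.mem_univ j) h)]
    simp [Pi.single_eq_same, fourier_one]; rfl
  show chi (Pi.single j 1) x ≠ chi (Pi.single j 1) y
  rw [key, key]
  intro h
  exact hj (injective_toCircle one_ne_zero (Subtype.coe_injective h))

lemma chiAlg_closure : (chiAlg ν).topologicalClosure = ⊤ :=
  ContinuousMap.starSubalgebra_topologicalClosure_eq_top_of_separatesPoints _ chiAlg_separates

lemma chiAlg_carrier (ν : ℕ) : (chiAlg ν : Set C(Fin ν → 𝕋, ℂ)) = chiSpan ν := rfl

lemma vol_prob (ν : ℕ) : IsProbabilityMeasure (volume : Measure (Fin ν → 𝕋)) := by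
  constructor
  have : (volume : Measure (Fin ν → 𝕋)) Set.univ = ∏ _j : Fin ν, (volume : Measure 𝕋) Set.univ := by
    rw [← Measure.pi_univ]; rfl
  rw [this]
  haveI := vol_prob1
  simp [measure_univ]

lemma cont_integrable {X : Type*} [TopologicalSpace X] [CompactSpace X] [MeasurableSpace X]
    [OpensMeasurableSpace X] {μ : Measure X} [IsFiniteMeasure μ] (f : C(X, ℂ)) :
    Integrable f μ :=
  f.continuous.integrable_of_hasCompactSupport (isClosed_tsupport _).isCompact

set_option synthInstance.maxHeartbeats 1000000 in
set_option maxHeartbeats 1000000 in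
theorem dense_orbit (α : Fin ν → ℝ)
    (hα : ∀ m : Fin ν → ℤ, m ≠ 0 → ((∑ j, (m j : ℝ) * α j : ℝ) : 𝕋) ≠ 0) :
    Dense (Set.range fun n : ℤ => (n • fun j => ((α j : ℝ) : 𝕋) : Fin ν → 𝕋)) := by
  haveI := vol_prob ν
  set a : Fin ν → 𝕋 := fun j => ((α j : ℝ) : 𝕋) with ha
  set S : AddSubgroup (Fin ν → 𝕋) := AddSubgroup.closure {a} with hS
  set H : AddSubgroup (Fin ν → 𝕋) := S.topologicalClosure with hHdef
  have hrange : Set.range (fun n : ℤ => n • a) = (S : Set (Fin ν → 𝕋)) := by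
    ext x
    simp only [Set.mem_range, SetLike.mem_coe, hS]
    exact ⟨fun ⟨n, hn⟩ => AddSubgroup.mem_closure_singleton.mpr ⟨n, hn⟩,
      fun h => AddSubgroup.mem_closure_singleton.mp h⟩
  -- reduce to H = ⊤
  suffices htop : H = ⊤ by
    rw [dense_iff_closure_eq, hrange]
    have : closure (S : Set (Fin ν → 𝕋)) = (H : Set (Fin ν → 𝕋)) := rfl
    rw [this, htop]; rfl
  by_contra hne
  obtain ⟨g, hg⟩ : ∃ g, g ∉ H := by
    by_contra h; push_neg at h; exact hne ((AddSubgroup.eq_top_iff' H).mpr h)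
  have hHc : IsClosed (H : Set (Fin ν → 𝕋)) := S.isClosed_topologicalClosure
  haveI : CompactSpace H := isCompact_iff_compactSpace.mp hHc.isCompact
  haveI : BorelSpace H := Subtype.borelSpace _
  haveI : LocallyCompactSpace H := inferInstance
  set μ : Measure H := Measure.addHaarMeasure (⊤ : TopologicalSpace.PositiveCompacts H) with hμ
  haveI hμprob : IsProbabilityMeasure μ := by
    constructor
    have h1 := Measure.addHaarMeasure_self (K₀ := (⊤ : TopologicalSpace.PositiveCompacts H))
    rw [TopologicalSpace.PositiveCompacts.coe_top] at h1
    exact h1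
  haveI : μ.IsAddLeftInvariant := inferInstance
  haveI : μ.IsAddRightInvariant := inferInstance
  set μ' : Measure (Fin ν → 𝕋) := Measure.map Subtype.val μ with hμ'
  have hvalm : Measurable (Subtype.val : H → Fin ν → 𝕋) := continuous_subtype_val.measurable
  haveI hμ'prob : IsProbabilityMeasure μ' := Measure.isProbabilityMeasure_map hvalm.aemeasurable
  haveI : IsFiniteMeasure μ' := inferInstance
  have haH : a ∈ H := S.le_topologicalClosure (AddSubgroup.mem_closure_singleton.mpr ⟨1, one_smul _ _⟩)
  set a' : H := ⟨a, haH⟩ with ha'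
  -- integrals of characters against μ'
  have hmap : ∀ m : Fin ν → ℤ, ∫ x, chi m x ∂μ' = ∫ h : H, chi m ↑h ∂μ := fun m =>
    integral_map hvalm.aemeasurable ((chi m).continuous.aestronglyMeasurable)
  have hchiμ' : ∀ m : Fin ν → ℤ, m ≠ 0 → ∫ x, chi m x ∂μ' = 0 := by
    intro m hm
    have h1 : ∫ h : H, chi m ↑h ∂μ = ∫ h : H, chi m ↑(h + a') ∂μ :=
      (integral_add_right_eq_self (μ := μ) (fun h : H => chi m ↑h) a').symm
    have h2 : ∀ h : H, chi m ↑(h + a') = chi m a * chi m ↑h := by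
      intro h
      have : ((h + a' : H) : Fin ν → 𝕋) = ↑h + a := rfl
      rw [this, chi_add_apply, mul_comm]
    simp_rw [h2] at h1
    rw [integral_const_mul] at h1
    have hchia : chi m a ≠ 1 := by
      rw [ha, chi_coe, Ne, e_eq_one_iff]
      exact hα m hm
    have := hmap m
    rw [this] at *
    have h3 : (1 - chi m a) * ∫ h : H, chi m ↑h ∂μ = 0 := by ring_nf; linear_combination h1
    rcases mul_eq_zero.mp h3 with h | h
    · exact absurd (by linear_combination -h : chi m a = 1) hchia
    · rw [this, h]
  -- integrals agree on the span
  have hspan : ∀ f ∈ chiSpan ν, ∫ x, (f : C(Fin ν → 𝕋, ℂ)) x ∂μ' = ∫ x, f x := by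
    intro f hf
    induction hf using Submodule.span_induction with
    | mem f hf =>
      obtain ⟨m, rfl⟩ := hf
      by_cases hm : m = 0
      · subst hm; rw [chi_zero]
        simp [ContinuousMap.one_apply]
      · rw [hchiμ' m hm]
        have := integral_chi_vol hm
        simp_rw [chi_apply]
        rw [this]
    | zero => simp
    | add f₁ f₂ hf₁ hf₂ h1 h2 =>
      simp only [ContinuousMap.add_apply]
      rw [integral_add (cont_integrable f₁) (cont_integrable f₂),
        integral_add (cont_integrable f₁) (cont_integrable f₂), h1, h2]
    | smul c f hf h =>
      simp only [ContinuousMap.smul_apply]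
      rw [integral_smul, integral_smul, h]
  -- integrals agree on all continuous functions
  have hall : ∀ f : C(Fin ν → 𝕋, ℂ), ∫ x, f x ∂μ' = ∫ x, f x := by
    intro f
    have hfc : f ∈ closure (chiAlg ν : Set C(Fin ν → 𝕋, ℂ)) := by
      have := chiAlg_closure (ν := ν)
      have hmem : f ∈ (chiAlg ν).topologicalClosure := this ▸ trivial
      exact hmem
    have key : ∀ ε > (0:ℝ), ‖(∫ x, f x ∂μ') - ∫ x, f x‖ ≤ 2 * ε := by
      intro ε hε
      obtain ⟨p, hp, hpf⟩ := Metric.mem_closure_iff.mp hfc ε hε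
      rw [chiAlg_carrier] at hp
      have hpμ' := hspan p hp
      have hb : ∀ (m : Measure (Fin ν → 𝕋)), IsProbabilityMeasure m →
          ‖(∫ x, f x ∂m) - ∫ x, p x ∂m‖ ≤ ε := by
        intro m hm
        rw [← integral_sub (cont_integrable f) (cont_integrable p)]
        have hbound : ∀ᵐ x ∂m, ‖f x - p x‖ ≤ ε := by
          filter_upwards with x
          calc ‖f x - p x‖ ≤ ‖f - p‖ := by
                have := ContinuousMap.norm_coe_le_norm (f - p) x
                simpa using this
            _ ≤ ε := by
                have : dist f p < ε := hpf
                rw [dist_eq_norm] at this; exact this.le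
        have := norm_integral_le_of_norm_le_const (μ := m) hbound
        simpa [hm.measure_univ] using this
      calc ‖(∫ x, f x ∂μ') - ∫ x, f x‖
          = ‖((∫ x, f x ∂μ') - ∫ x, p x ∂μ') + ((∫ x, p x) - ∫ x, f x)‖ := by rw [hpμ']; ring_nf
        _ ≤ ‖(∫ x, f x ∂μ') - ∫ x, p x ∂μ'‖ + ‖(∫ x, p x) - ∫ x, f x‖ := norm_add_le _ _
        _ ≤ ε + ε := by
            refine add_le_add (hb μ' inferInstance) ?_
            rw [norm_sub_rev]; exact hb volume inferInstance
        _ = 2 * ε := by ring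
    have : ‖(∫ x, f x ∂μ') - ∫ x, f x‖ = 0 := by
      by_contra h
      have hpos : 0 < ‖(∫ x, f x ∂μ') - ∫ x, f x‖ := lt_of_le_of_ne (norm_nonneg _) (Ne.symm h)
      have := key (‖(∫ x, f x ∂μ') - ∫ x, f x‖ / 4) (by linarith)
      linarith
    exact sub_eq_zero.mp (norm_eq_zero.mp this)
  -- Urysohn function separating `g` from `H`
  obtain ⟨f, hf0, hf1, hf01⟩ := exists_continuous_zero_one_of_isClosed hHc
    (isClosed_singleton (x := g)) (Set.disjoint_singleton_right.mpr hg)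
  set fC : C(Fin ν → 𝕋, ℂ) :=
    (⟨Complex.ofReal, Complex.continuous_ofReal⟩ : C(ℝ, ℂ)).comp f with hfC
  have hint : Integrable (⇑f) (volume : Measure (Fin ν → 𝕋)) :=
    f.continuous.integrable_of_hasCompactSupport (isClosed_tsupport _).isCompact
  have hL : ∫ x, fC x ∂μ' = 0 := by
    rw [integral_map hvalm.aemeasurable fC.continuous.aestronglyMeasurable]
    have : ∀ h : H, fC ↑h = 0 := by
      intro h
      have : f ↑h = 0 := hf0 h.2
      simp [hfC, ContinuousMap.comp_apply, this]
    simp only [this, integral_const, smul_zero]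
  have hR : ∫ x, fC x = ((∫ x, f x : ℝ) : ℂ) := by
    simp only [hfC, ContinuousMap.comp_apply, ContinuousMap.coe_mk]
    exact integral_ofReal
  have hpos : 0 < ∫ x, f x := by
    rw [integral_pos_iff_support_of_nonneg (fun x => (hf01 x).1) hint]
    have hsopen : IsOpen (Function.support f) := by
      have : Function.support ⇑f = (⇑f) ⁻¹' ({0}ᶜ) := rfl
      rw [this]
      exact isOpen_compl_singleton.preimage f.continuous
    have hgmem : g ∈ Function.support ⇑f := by
      simp only [Function.mem_support]
      rw [hf1 rfl]; norm_num
    exact hsopen.measure_pos volume ⟨g, hgmem⟩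
  have := hall fC
  rw [hL, hR] at this
  have : (∫ x, f x : ℝ) = 0 := by exact_mod_cast this.symm
  linarith

lemma nontrivial_T : Nontrivial 𝕋 := by
  refine ⟨(((1:ℝ)/2 : ℝ) : 𝕋), 0, ?_⟩
  rw [Ne, AddCircle.coe_eq_zero_iff]
  rintro ⟨n, hn⟩
  rw [zsmul_eq_mul, mul_one] at hn
  have : ((2 * n : ℤ) : ℝ) = 1 := by push_cast; linarith
  have h2 : (2 * n : ℤ) = 1 := by exact_mod_cast this
  omega

theorem kronecker (α : Fin ν → ℝ)
    (hli : LinearIndependent ℚ (Fin.cons (1:ℝ) α : Fin (ν + 1) → ℝ))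
    (δ : ℝ) (hδ : δ ∈ Set.Ioo (0:ℝ) (1/2)) (β : Fin ν → ℝ) :
    {x : ℤ | ∀ j, |(x : ℝ) * α j + β j - round ((x : ℝ) * α j + β j)| < δ}.Infinite := by
  obtain ⟨hδ0, hδ2⟩ := hδ
  rcases Nat.eq_zero_or_pos ν with hν | hν
  · subst hν
    have h : {x : ℤ | ∀ j, |(x : ℝ) * α j + β j - round ((x : ℝ) * α j + β j)| < δ} = Set.univ :=
      Set.eq_univ_iff_forall.mpr (fun x j => j.elim0)
    rw [h]
    exact Set.infinite_univ
  -- linear independence consequence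
  have hα : ∀ m : Fin ν → ℤ, m ≠ 0 → ((∑ j, (m j : ℝ) * α j : ℝ) : 𝕋) ≠ 0 := by
    intro m hm h0
    obtain ⟨k, hk⟩ := (AddCircle.coe_eq_zero_iff 1).mp h0
    rw [zsmul_eq_mul, mul_one] at hk
    set g : Fin (ν + 1) → ℚ := Fin.cons (-(k : ℚ)) (fun j => (m j : ℚ)) with hg
    have hsum : ∑ i, g i • (Fin.cons (1:ℝ) α : Fin (ν + 1) → ℝ) i = 0 := by
      rw [Fin.sum_univ_succ]
      simp only [hg, Fin.cons_zero, Fin.cons_succ, Rat.smul_def]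
      push_cast
      linarith [hk]
    have hz := Fintype.linearIndependent_iff.mp hli g hsum
    obtain ⟨j, hj⟩ : ∃ j, m j ≠ 0 := by
      by_contra h; push_neg at h; exact hm (funext h)
    have := hz j.succ
    rw [hg, Fin.cons_succ] at this
    exact hj (by exact_mod_cast this)
  haveI : Nontrivial 𝕋 := nontrivial_T
  haveI : Nonempty (Fin ν) := ⟨⟨0, hν⟩⟩
  set a : Fin ν → 𝕋 := fun j => ((α j : ℝ) : 𝕋) with ha
  set b : Fin ν → 𝕋 := fun j => ((β j : ℝ) : 𝕋) with hb
  have hd := dense_orbit α hα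
  -- the translated orbit is dense
  have hdb : Dense (Set.range fun n : ℤ => n • a + b) := by
    rw [dense_iff_closure_eq]
    have himg : (fun z => z + b) '' (Set.range fun n : ℤ => n • a)
        = Set.range (fun n : ℤ => n • a + b) := by
      ext z
      constructor
      · rintro ⟨w, ⟨n, rfl⟩, rfl⟩; exact ⟨n, rfl⟩
      · rintro ⟨n, rfl⟩; exact ⟨n • a, ⟨n, rfl⟩, rfl⟩
    have h2 := (Homeomorph.addRight b).image_closure (Set.range fun n : ℤ => n • a)
    have h3 : (Homeomorph.addRight b) '' closure (Set.range fun n : ℤ => n • a)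
        = Set.univ := by
      rw [hd.closure_eq, Set.image_univ]
      exact (Homeomorph.addRight b).surjective.range_eq
    have h4 : ((Homeomorph.addRight b) : (Fin ν → 𝕋) → (Fin ν → 𝕋))
        = fun z => z + b := rfl
    rw [h4] at h2 h3
    rw [← himg, ← h2, h3]
  -- the target open set
  set U : Set (Fin ν → 𝕋) := {z | ∀ j, ‖z j‖ < δ} with hU
  have hUopen : IsOpen U := by
    have : U = ⋂ j, (fun z : Fin ν → 𝕋 => z j) ⁻¹' (Metric.ball 0 δ) := by
      ext z
      simp [hU, Metric.mem_ball, dist_zero_right]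
    rw [this]
    exact isOpen_iInter_of_finite fun j => Metric.isOpen_ball.preimage (continuous_apply j)
  have hU0 : (0 : Fin ν → 𝕋) ∈ U := by
    intro j; simpa using hδ0
  -- membership translation
  have hpoint : ∀ x : ℤ, x • a + b = fun j => (((x : ℝ) * α j + β j : ℝ) : 𝕋) := by
    intro x
    funext j
    show x • ((α j : ℝ) : 𝕋) + ((β j : ℝ) : 𝕋) = _
    rw [← AddCircle.coe_zsmul, zsmul_eq_mul, ← AddCircle.coe_add]
  have hnorm : ∀ y : ℝ, ‖((y : ℝ) : 𝕋)‖ = |y - round y| := by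
    intro y
    rw [AddCircle.norm_eq]
    simp
  have hmem : ∀ x : ℤ,
      (x ∈ {x : ℤ | ∀ j, |(x : ℝ) * α j + β j - round ((x : ℝ) * α j + β j)| < δ}
        ↔ x • a + b ∈ U) := by
    intro x
    rw [hpoint x]
    constructor
    · intro hx j; rw [hnorm]; exact hx j
    · intro hx j; have := hx j; rwa [hnorm] at this
  -- infinitude
  intro hfin
  set A : Set (Fin ν → 𝕋) := (fun x : ℤ => x • a + b) '' {x : ℤ | ∀ j, |(x : ℝ) * α j + β j - round ((x : ℝ) * α j + β j)| < δ} with hA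
  have hAfin : A.Finite := hfin.image _
  have hUA : (U \ A).Nonempty := by
    by_contra h
    rw [Set.not_nonempty_iff_eq_empty, Set.diff_eq_empty] at h
    -- U ⊆ A finite: extract an open singleton
    have huU : (0 : Fin ν → 𝕋) ∈ U := hU0
    have hsing : {(0 : Fin ν → 𝕋)} = U \ (A \ {(0 : Fin ν → 𝕋)}) := by
      apply Set.Subset.antisymm
      · rintro z rfl
        exact ⟨huU, fun hz => hz.2 rfl⟩
      · rintro z ⟨hzU, hz⟩
        by_contra hne
        exact hz ⟨h hzU, fun h' => hne h'⟩
    have hopen : IsOpen ({(0 : Fin ν → 𝕋)} : Set (Fin ν → 𝕋)) := by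
      rw [hsing]
      exact hUopen.sdiff hAfin.diff.isClosed
    have hclopen : IsClopen ({(0 : Fin ν → 𝕋)} : Set (Fin ν → 𝕋)) :=
      ⟨isClosed_singleton, hopen⟩
    have huniv := hclopen.eq_univ ⟨0, rfl⟩
    obtain ⟨u, v, huv⟩ := exists_pair_ne (Fin ν → 𝕋)
    have hu : u ∈ ({(0 : Fin ν → 𝕋)} : Set (Fin ν → 𝕋)) := huniv ▸ Set.mem_univ u
    have hv : v ∈ ({(0 : Fin ν → 𝕋)} : Set (Fin ν → 𝕋)) := huniv ▸ Set.mem_univ v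
    rw [Set.mem_singleton_iff] at hu hv
    exact huv (hu.trans hv.symm)
  obtain ⟨z, hzUA, x, rfl⟩ := hdb.inter_open_nonempty _ (hUopen.sdiff hAfin.isClosed) hUA
  exact hzUA.2 ⟨x, (hmem x).mpr hzUA.1, rfl⟩

end Kron

theorem stmt15 (ν : ℕ) (α : Fin ν → ℝ)
    (hli : LinearIndependent ℚ (Fin.cons (1:ℝ) α : Fin (ν + 1) → ℝ))
    (δ : ℝ) (hδ : δ ∈ Set.Ioo (0:ℝ) (1/2)) (β : Fin ν → ℝ) :
    {x : ℤ | ∀ j, |(x : ℝ) * α j + β j - round ((x : ℝ) * α j + β j)| < δ}.Infinite :=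
  Kron.kronecker α hli δ hδ β
end
end

section
/- Let α > 0 be a rational number that is not an integer, and let L be a sufficiently large positive integer. Then there exists a real number x₀ (depending on L and α) such that sin(n^α · x₀) ≥ 0.99 for every square-free positive integer n ≤ L. -/
set_option maxHeartbeats 1000000

open Polynomial IntermediateField

-- A0: the ratio (n/k)^(a/b) is irrational
lemma ratio_not_rat_s16 {a b n k : ℕ} (ha : 0 < a) (hb : 2 ≤ b) (hab : Nat.Coprime a b)
    (hn : Squarefree n) (hk : Squarefree k) (hnk : n ≠ k) (r : ℚ) :
    r ^ b * (k : ℚ) ^ a ≠ (n : ℚ) ^ a := by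
  intro h
  have hn0 : n ≠ 0 := hn.ne_zero
  have hk0 : k ≠ 0 := hk.ne_zero
  have hr0 : r ≠ 0 := by
    rintro rfl
    simp only [zero_pow (by omega : b ≠ 0), zero_mul] at h
    exact (pow_ne_zero a (Nat.cast_ne_zero.mpr hn0)) h.symm
  -- integer equation
  have hZ : r.num ^ b * (k : ℤ) ^ a = (r.den : ℤ) ^ b * (n : ℤ) ^ a := by
    have h2 : (r * r.den) ^ b * (k : ℚ) ^ a = (r.den : ℚ) ^ b * (n : ℚ) ^ a := by
      rw [mul_pow, show r ^ b * (r.den : ℚ) ^ b * (k : ℚ) ^ a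
        = (r.den : ℚ) ^ b * (r ^ b * (k : ℚ) ^ a) from by ring, h]
    rw [Rat.mul_den_eq_num] at h2
    exact_mod_cast h2
  have hN : r.num.natAbs ^ b * k ^ a = r.den ^ b * n ^ a := by
    have := congrArg Int.natAbs hZ
    simpa [Int.natAbs_mul, Int.natAbs_pow] using this
  have hc0 : r.num.natAbs ≠ 0 := by
    simp [Int.natAbs_eq_zero, Rat.num_ne_zero, hr0]
  have hd0 : r.den ≠ 0 := r.den_nz
  -- find a prime dividing exactly one of n, k
  have hex : ∃ p, p.Prime ∧ ((p ∣ n ∧ ¬ p ∣ k) ∨ (p ∣ k ∧ ¬ p ∣ n)) := by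
    by_contra hno
    push_neg at hno
    have hPF : n.primeFactors = k.primeFactors := by
      ext p
      simp only [Nat.mem_primeFactors]
      constructor
      · rintro ⟨pp, pdvd, -⟩
        refine ⟨pp, ?_, hk0⟩
        by_contra hnd
        have := hno p pp
        tauto
      · rintro ⟨pp, pdvd, -⟩
        refine ⟨pp, ?_, hn0⟩
        by_contra hnd
        have := hno p pp
        tauto
    have := Nat.prod_primeFactors_of_squarefree hn
    rw [hPF, Nat.prod_primeFactors_of_squarefree hk] at this
    exact hnk this.symm
  obtain ⟨p, pp, hcase⟩ := hex
  have key : ∀ x y : ℕ, b * x = b * y + a → False := by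
    intro x y hxy
    have hdvd : b ∣ a := by
      have h1 : b ∣ b * y + a := hxy ▸ Dvd.intro x rfl
      exact (Nat.dvd_add_right ⟨y, rfl⟩).mp h1
    have : b ∣ Nat.gcd a b := Nat.dvd_gcd hdvd dvd_rfl
    rw [hab] at this
    have := Nat.le_of_dvd one_pos this
    omega
  have hfact := congrArg (fun (x : ℕ) => x.factorization p) hN
  simp only [Nat.factorization_mul (pow_ne_zero _ hc0) (pow_ne_zero _ hk0),
    Nat.factorization_mul (pow_ne_zero _ hd0) (pow_ne_zero _ hn0),
    Nat.factorization_pow, Finsupp.add_apply, Finsupp.smul_apply, smul_eq_mul] at hfact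
  rcases hcase with ⟨hpn, hpk⟩ | ⟨hpk, hpn⟩
  · have h1 : n.factorization p = 1 :=
      le_antisymm ((Nat.squarefree_iff_factorization_le_one hn0).mp hn p)
        (Nat.Prime.factorization_pos_of_dvd pp hn0 hpn)
    have h2 : k.factorization p = 0 := Nat.factorization_eq_zero_of_not_dvd hpk
    rw [h1, h2, mul_one, mul_zero, add_zero] at hfact
    exact key _ _ hfact
  · have h1 : k.factorization p = 1 :=
      le_antisymm ((Nat.squarefree_iff_factorization_le_one hk0).mp hk p)
        (Nat.Prime.factorization_pos_of_dvd pp hk0 hpk)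
    have h2 : n.factorization p = 0 := Nat.factorization_eq_zero_of_not_dvd hpn
    rw [h1, h2, mul_one, mul_zero, add_zero] at hfact
    exact key _ _ hfact.symm

-- A1: minpoly of a positive real whose b-th power is rational, and which is irrational,
-- has vanishing next coefficient
lemma nextCoeff_minpoly_eq_zero {y : ℝ} (hy : 0 < y) {b : ℕ} (hb : 0 < b) {c : ℚ}
    (hc : y ^ b = (c : ℝ)) (hirr : ∀ r : ℚ, (r : ℝ) ≠ y) :
    (minpoly ℚ y).nextCoeff = 0 := by
  have haev : (aeval y) (X ^ b - C c : ℚ[X]) = 0 := by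
    simp [hc]
  have hint : IsIntegral ℚ y := ⟨X ^ b - C c, monic_X_pow_sub_C c hb.ne', haev⟩
  set P := minpoly ℚ y with hP
  have hPdvd : P ∣ X ^ b - C c := minpoly.dvd ℚ y haev
  set d := P.natDegree with hd
  have hd1 : 0 < d := minpoly.natDegree_pos hint
  have hd2 : 2 ≤ d := by
    rcases Nat.lt_or_ge d 2 with h | h
    · exfalso
      have hdd : P.natDegree = 1 := by omega
      have hdeg1 : P.degree = 1 := by
        rw [Polynomial.degree_eq_natDegree (minpoly.ne_zero hint), hdd]
        rfl
      obtain ⟨r, hr⟩ := (minpoly.degree_eq_one_iff).mp hdeg1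
      exact hirr r hr
    · exact h
  -- roots in ℂ
  set Pc := P.map (algebraMap ℚ ℂ) with hPc
  have hPmonic : P.Monic := minpoly.monic hint
  have hPcmonic : Pc.Monic := hPmonic.map _
  have hsplits : Pc.Splits := by
    exact IsAlgClosed.splits Pc
  have hdeg : Pc.natDegree = d := hPmonic.natDegree_map _
  have hcard : Multiset.card Pc.roots = d := by
    rw [splits_iff_card_roots.mp hsplits, hdeg]
  have habs : ∀ z ∈ Pc.roots, ‖z‖ = y := by
    intro z hz
    have hroot : Pc.IsRoot z := isRoot_of_mem_roots hz
    have haevz : (aeval z) P = 0 := by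
      rw [aeval_def, ← eval_map]
      exact hroot
    have hzb : z ^ b = (c : ℂ) := by
      obtain ⟨Q, hQ⟩ := hPdvd
      have h1 := congrArg (aeval z) hQ
      rw [map_mul, haevz, zero_mul] at h1
      simp only [map_sub, map_pow, aeval_X, aeval_C] at h1
      have h2 : z ^ b - (algebraMap ℚ ℂ) c = 0 := h1
      rw [sub_eq_zero] at h2
      rw [h2]
      rfl
    have h1 : ‖z‖ ^ b = y ^ b := by
      rw [← norm_pow, hzb, hc]
      have : (0:ℝ) ≤ (c:ℝ) := hc ▸ pow_nonneg hy.le b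
      rw [show ((c:ℚ):ℂ) = (((c:ℚ):ℝ):ℂ) from by push_cast; ring]
      rw [Complex.norm_real, Real.norm_eq_abs, abs_of_nonneg this]
    exact (pow_left_strictMonoOn₀ hb.ne').injOn (Set.mem_setOf.mpr (norm_nonneg z))
      (Set.mem_setOf.mpr hy.le) h1
  -- |P.coeff 0| = y ^ d
  have hprod : Pc.coeff 0 = (-1) ^ d * Pc.roots.prod := by
    have := hsplits.coeff_zero_eq_prod_roots_of_monic hPcmonic
    rw [hdeg] at this; exact this
  have habsprod : ‖Pc.coeff 0‖ = y ^ d := by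
    rw [hprod, norm_mul, norm_pow, show ‖Pc.roots.prod‖ = (Pc.roots.map (fun z => ‖z‖)).prod
      from map_multiset_prod (normHom (α := ℂ)) _]
    have : Multiset.map (fun z : ℂ => ‖z‖) Pc.roots = Multiset.replicate d y := by
      rw [Multiset.eq_replicate]
      constructor
      · rw [Multiset.card_map, hcard]
      · intro x hx
        obtain ⟨z, hz, rfl⟩ := Multiset.mem_map.mp hx
        exact habs z hz
    rw [this, Multiset.prod_replicate]
    simp
  set r : ℚ := |P.coeff 0| with hr
  have hyd : y ^ d = (r : ℝ) := by
    have : Pc.coeff 0 = ((P.coeff 0 : ℚ) : ℂ) := by rw [hPc, coeff_map]; rfl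
    rw [← habsprod, this]
    push_cast
    rw [show ((P.coeff 0 : ℚ) : ℂ) = (((P.coeff 0 : ℚ) : ℝ) : ℂ) from by push_cast; ring,
      Complex.norm_real, Real.norm_eq_abs]
    norm_cast
  -- P = X^d - C r
  have hQaev : (aeval y) (X ^ d - C r : ℚ[X]) = 0 := by simp [hyd]
  have hQdvd : P ∣ X ^ d - C r := minpoly.dvd ℚ y hQaev
  have hQmonic : (X ^ d - C r : ℚ[X]).Monic := monic_X_pow_sub_C r hd1.ne'
  have hPQ : P = X ^ d - C r := by
    apply eq_of_monic_of_associated hPmonic hQmonic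
    exact associated_of_dvd_of_natDegree_le hQdvd hQmonic.ne_zero
      (by rw [natDegree_X_pow_sub_C])
  rw [nextCoeff_of_natDegree_pos (by rw [← hd]; omega), ← hd, hPQ]
  rw [coeff_sub, coeff_X_pow, coeff_C]
  have : d - 1 ≠ d := by omega
  have h0 : d - 1 ≠ 0 := by omega
  simp [this, h0]

-- A2: trace vanishes when minpoly nextCoeff vanishes
lemma trace_eq_zero_of_nextCoeff {K F : Type*} [Field K] [Field F] [Algebra K F]
    [FiniteDimensional K F]
    (x : F) (h : (minpoly K x).nextCoeff = 0) : Algebra.trace K F x = 0 := by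
  have hx : IsIntegral K x := IsIntegral.of_finite K x
  rw [trace_eq_trace_adjoin K x]
  have hgen : Algebra.trace K K⟮x⟯ (IntermediateField.AdjoinSimple.gen K x)
      = -(minpoly K (IntermediateField.AdjoinSimple.gen K x)).nextCoeff := by
    rw [← IntermediateField.adjoin.powerBasis_gen hx]
    exact (IntermediateField.adjoin.powerBasis hx).trace_gen_eq_nextCoeff_minpoly
  have hmin : minpoly K (IntermediateField.AdjoinSimple.gen K x) = minpoly K x := by
    rw [← minpoly.algebraMap_eq (algebraMap K⟮x⟯ F).injective,
      IntermediateField.AdjoinSimple.algebraMap_gen]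
  rw [hgen, hmin, h, neg_zero, smul_zero]

-- A3: linear independence of (n : ℝ) ^ (a/b) over ℚ for squarefree n
lemma indep_sqfree {a b : ℕ} (ha : 0 < a) (hb : 2 ≤ b) (hab : Nat.Coprime a b)
    (s : Finset ℕ) (hsq : ∀ n ∈ s, Squarefree n) (m : ℕ → ℤ)
    (hrel : ∑ n ∈ s, (m n : ℝ) * (n : ℝ) ^ ((a : ℝ) / (b : ℝ)) = 0) :
    ∀ k ∈ s, m k = 0 := by
  intro k hk
  set α : ℝ := (a : ℝ) / (b : ℝ) with hα
  set v : ℕ → ℝ := fun n => (n : ℝ) ^ α with hv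
  have hvpos : ∀ n ∈ s, 0 < v n := fun n hn =>
    Real.rpow_pos_of_pos (by exact_mod_cast (hsq n hn).ne_zero.bot_lt) α
  set y : ℕ → ℝ := fun n => v n / v k with hy
  have hb0 : (0:ℝ) < (b:ℝ) := by positivity
  have hvpow : ∀ n ∈ s, v n ^ b = ((n : ℕ) : ℝ) ^ (a : ℕ) := by
    intro n hn
    have hn0 : (0:ℝ) ≤ (n:ℝ) := by positivity
    rw [hv, ← Real.rpow_natCast ((n:ℝ) ^ α) b, ← Real.rpow_mul hn0, hα,
      div_mul_cancel₀ _ hb0.ne', Real.rpow_natCast]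
  set c : ℕ → ℚ := fun n => ((n ^ a : ℕ) : ℚ) / ((k ^ a : ℕ) : ℚ) with hcq
  have hypow : ∀ n ∈ s, y n ^ b = ((c n : ℚ) : ℝ) := by
    intro n hn
    rw [hy, div_pow, hvpow n hn, hvpow k hk, hcq]
    push_cast
    ring
  -- irrationality of y n for n ≠ k
  have hirr : ∀ n ∈ s, n ≠ k → ∀ r : ℚ, (r : ℝ) ≠ y n := by
    intro n hn hnk r hr
    have h1 : (r : ℝ) ^ b = ((c n : ℚ) : ℝ) := by
      rw [hr]; exact hypow n hn
    have h2 : (r : ℚ) ^ b = c n := by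
      exact_mod_cast h1
    have hka : ((k ^ a : ℕ) : ℚ) ≠ 0 := by
      exact_mod_cast pow_ne_zero a (hsq k hk).ne_zero
    have h3 : r ^ b * (k : ℚ) ^ a = (n : ℚ) ^ a := by
      rw [hcq] at h2
      push_cast at h2 hka
      rw [h2, div_mul_cancel₀ _ hka]
    exact ratio_not_rat_s16 ha hb hab (hsq n hn) (hsq k hk) hnk r h3
  -- integrality
  have hyint : ∀ n ∈ s, IsIntegral ℚ (y n) := by
    intro n hn
    refine ⟨X ^ b - C (c n), monic_X_pow_sub_C _ (by omega), ?_⟩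
    simp [hypow n hn]
  -- the field F
  set Y : Set ℝ := (fun n => y n) '' ↑s with hY
  have hYfin : Y.Finite := s.finite_toSet.image _
  haveI : Finite ↑Y := hYfin.to_subtype
  set F := IntermediateField.adjoin ℚ Y with hF
  haveI : FiniteDimensional ℚ F := IntermediateField.finiteDimensional_adjoin (by
    rintro x ⟨n, hn, rfl⟩
    exact hyint n hn)
  set w : ℕ → F := fun n => if h : n ∈ s then
      ⟨y n, IntermediateField.subset_adjoin ℚ Y ⟨n, h, rfl⟩⟩ else 0 with hw
  have hwcoe : ∀ n ∈ s, (w n : ℝ) = y n := by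
    intro n hn; rw [hw]; simp [hn]
  -- the relation in F
  have hrelF : ∑ n ∈ s, (m n : ℚ) • w n = 0 := by
    apply (algebraMap F ℝ).injective
    rw [map_sum, map_zero]
    have : ∀ n ∈ s, (algebraMap F ℝ) ((m n : ℚ) • w n) = (m n : ℝ) * y n := by
      intro n hn
      rw [Algebra.smul_def, map_mul]
      simp only [IntermediateField.algebraMap_apply]
      rw [hwcoe n hn]
      norm_cast
    rw [Finset.sum_congr rfl this]
    have : ∑ n ∈ s, (m n : ℝ) * y n = (∑ n ∈ s, (m n : ℝ) * v n) / v k := by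
      rw [Finset.sum_div]
      exact Finset.sum_congr rfl fun n hn => by rw [hy]; ring
    rw [this, hrel, zero_div]
  -- apply the trace
  have htr := congrArg (Algebra.trace ℚ F) hrelF
  rw [map_sum, map_zero] at htr
  have hterm : ∀ n ∈ s, Algebra.trace ℚ F ((m n : ℚ) • w n)
      = if n = k then (m k : ℚ) * (Module.finrank ℚ F : ℚ) else 0 := by
    intro n hn
    rw [LinearMap.map_smul, smul_eq_mul]
    by_cases hnk : n = k
    · subst hnk
      have hwk : w n = 1 := by
        apply (algebraMap F ℝ).injective
        rw [map_one, IntermediateField.algebraMap_apply, hwcoe n hn]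
        show v n / v n = 1
        exact div_self (hvpos n hn).ne'
      rw [hwk, if_pos rfl]
      have : Algebra.trace ℚ F 1 = (Module.finrank ℚ F : ℚ) := by
        have := Algebra.trace_algebraMap (R := ℚ) (S := F) 1
        rw [map_one] at this
        rw [this]
        simp
      rw [this]
    · rw [if_neg hnk]
      have h0 : Algebra.trace ℚ F (w n) = 0 := by
        apply trace_eq_zero_of_nextCoeff
        have hmeq : minpoly ℚ (w n) = minpoly ℚ (y n) := by
          rw [← minpoly.algebraMap_eq (algebraMap F ℝ).injective (w n),
            IntermediateField.algebraMap_apply, hwcoe n hn]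
        rw [hmeq]
        refine nextCoeff_minpoly_eq_zero ?_ (by omega : 0 < b) (hypow n hn) (hirr n hn hnk)
        exact div_pos (hvpos n hn) (hvpos k hk)
      rw [h0, mul_zero]
  rw [Finset.sum_congr rfl hterm, Finset.sum_ite_eq' s k
    (fun _ => (m k : ℚ) * (Module.finrank ℚ F : ℚ)), if_pos hk] at htr
  have hfr : (0:ℚ) < (Module.finrank ℚ F : ℚ) := by
    exact_mod_cast Module.finrank_pos
  have : (m k : ℚ) = 0 := by
    rcases mul_eq_zero.mp htr with h | h
    · exact h
    · exact absurd h hfr.ne'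
  exact_mod_cast this


namespace Stmt16Aux

noncomputable section

abbrev G : Type := ℕ → ℤ

abbrev R : Type := AddMonoidAlgebra ℂ G

/-- the character `m ↦ exp(i w(m))` -/
def expChar (w : G →+ ℝ) : Multiplicative G →* ℂ where
  toFun := fun m => Complex.exp (Complex.I * (w m.toAdd))
  map_one' := by simp
  map_mul' := by
    intro x y
    simp only [← Complex.exp_add]
    congr 1
    have : (x * y).toAdd = x.toAdd + y.toAdd := rfl
    rw [this, map_add]
    push_cast
    ring

def Ev (w : G →+ ℝ) : R →ₐ[ℂ] ℂ := (AddMonoidAlgebra.lift ℂ ℂ G) (expChar w)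

lemma Ev_single (w : G →+ ℝ) (a : G) (c : ℂ) :
    Ev w (AddMonoidAlgebra.single a c) = c * Complex.exp (Complex.I * (w a)) := by
  rw [Ev, AddMonoidAlgebra.lift_single]
  rfl

lemma Ev_apply (w : G →+ ℝ) (f : R) :
    Ev w f = ∑ g ∈ f.coeff.support, f.coeff g * Complex.exp (Complex.I * (w g)) := by
  rw [Ev, AddMonoidAlgebra.lift_apply]
  rw [Finsupp.sum]
  apply Finset.sum_congr rfl
  intro g hg
  rfl

/-- basis vector -/
def e (n : ℕ) : G := Pi.single n 1

/-- the trig polynomial (1 + sin x)/2 as an element of the group algebra,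
  in direction `n` -/
def Bel (n : ℕ) : R :=
  AddMonoidAlgebra.single 0 (1/2)
    + AddMonoidAlgebra.single (e n) (-(Complex.I/4))
    + AddMonoidAlgebra.single (-(e n)) (Complex.I/4)

lemma Ev_Bel (w : G →+ ℝ) (n : ℕ) :
    Ev w (Bel n) = (((1 + Real.sin (w (e n))) / 2 : ℝ) : ℂ) := by
  rw [Bel, map_add, map_add, Ev_single, Ev_single, Ev_single]
  rw [map_zero, map_neg]
  set x : ℝ := w (e n)
  rw [Complex.ofReal_div]
  push_cast
  rw [Complex.sin]
  simp only [Complex.ofReal_zero, mul_zero, Complex.exp_zero]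
  rw [show Complex.I * -(x:ℂ) = -(x:ℂ) * Complex.I from by ring,
    show Complex.I * (x:ℂ) = (x:ℂ) * Complex.I from by ring]
  ring

/-- support concentrated in coordinate `n` -/
def S1 (n : ℕ) : Set G := {g | ∀ j, j ≠ n → g j = 0}

/-- support concentrated in coordinates of `s` -/
def SS (s : Finset ℕ) : Set G := {g | ∀ j, j ∉ s → g j = 0}

lemma support_Bel (n : ℕ) : ↑(Bel n).coeff.support ⊆ S1 n := by
  classical
  intro g hg
  simp only [Finset.coe_subset, Finset.mem_coe] at hg
  have h1 := Finsupp.support_add (g₁ := (AddMonoidAlgebra.single (M := G) 0 (1/2)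
    + AddMonoidAlgebra.single (e n) (-(Complex.I/4))).coeff)
    (g₂ := (AddMonoidAlgebra.single (-(e n)) (Complex.I/4)).coeff)
  have h2 := Finsupp.support_add (g₁ := (AddMonoidAlgebra.single (M := G) 0 (1/2)).coeff)
    (g₂ := (AddMonoidAlgebra.single (e n) (-(Complex.I/4))).coeff)
  have hx := h1 hg
  rw [Finset.mem_union] at hx
  intro j hj
  rcases hx with hx | hx
  · have := h2 hx
    rw [Finset.mem_union] at this
    rcases this with hy | hy
    · have := Finsupp.support_single_subset hy
      simp only [Finset.mem_singleton] at this
      subst this; rfl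
    · have := Finsupp.support_single_subset hy
      simp only [Finset.mem_singleton] at this
      subst this
      exact Pi.single_eq_of_ne hj 1
  · have := Finsupp.support_single_subset hx
    simp only [Finset.mem_singleton] at this
    subst this
    show -(e n) j = 0
    simp [e, Pi.single_eq_of_ne hj]

lemma support_mul_subset {x y : R} {A : Set G}
    (hA : ∀ a ∈ A, ∀ b ∈ A, a + b ∈ A)
    (hx : ↑x.coeff.support ⊆ A) (hy : ↑y.coeff.support ⊆ A) : ↑(x * y).coeff.support ⊆ A := by
  classical
  intro g hg
  have := AddMonoidAlgebra.support_coeff_mul_subset x y (Finset.mem_coe.mp hg)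
  rw [Finset.mem_add] at this
  obtain ⟨a, ha, b, hb, rfl⟩ := this
  exact hA a (hx ha) b (hy hb)

lemma S1_add {n : ℕ} : ∀ a ∈ S1 n, ∀ b ∈ S1 n, a + b ∈ S1 n := by
  intro a ha b hb j hj
  rw [Pi.add_apply, ha j hj, hb j hj, add_zero]

lemma SS_add {s : Finset ℕ} : ∀ a ∈ SS s, ∀ b ∈ SS s, a + b ∈ SS s := by
  intro a ha b hb j hj
  rw [Pi.add_apply, ha j hj, hb j hj, add_zero]

lemma one_mem_S1 (n : ℕ) : ↑(1 : R).coeff.support ⊆ S1 n := by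
  rw [AddMonoidAlgebra.one_def]
  intro g hg
  have := Finsupp.support_single_subset (Finset.mem_coe.mp hg)
  simp only [Finset.mem_singleton] at this
  subst this
  intro j _; rfl

lemma support_Bel_pow (n : ℕ) (N : ℕ) : ↑((Bel n) ^ N).coeff.support ⊆ S1 n := by
  induction N with
  | zero => simpa using one_mem_S1 n
  | succ N ih =>
    rw [pow_succ]
    exact support_mul_subset S1_add ih (support_Bel n)

lemma S1_subset_SS {n : ℕ} {s : Finset ℕ} (hn : n ∈ s) : S1 n ⊆ SS s := by
  intro g hg j hj
  exact hg j (fun h => hj (h ▸ hn))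

lemma one_mem_SS (s : Finset ℕ) : ↑(1 : R).coeff.support ⊆ SS s := by
  rw [AddMonoidAlgebra.one_def]
  intro g hg
  have := Finsupp.support_single_subset (Finset.mem_coe.mp hg)
  simp only [Finset.mem_singleton] at this
  subst this
  intro j _; rfl

lemma mul_apply_zero {x y : R} {n : ℕ} {s : Finset ℕ} (hn : n ∉ s)
    (hx : ↑x.coeff.support ⊆ S1 n) (hy : ↑y.coeff.support ⊆ SS s) :
    (x * y).coeff 0 = x.coeff 0 * y.coeff 0 := by
  classical
  rw [AddMonoidAlgebra.coeff_mul]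
  rw [Finsupp.sum]
  have step1 : ∀ a₁ ∈ x.coeff.support,
      (Finsupp.sum y.coeff fun a₂ b₂ => if a₁ + a₂ = 0 then x.coeff a₁ * b₂ else 0)
      = if a₁ = 0 then x.coeff 0 * y.coeff 0 else 0 := by
    intro a₁ ha₁
    rw [Finsupp.sum]
    by_cases h : a₁ = 0
    · subst h
      rw [if_pos rfl]
      have : ∀ a₂ ∈ y.coeff.support, (if (0 : G) + a₂ = 0 then x.coeff 0 * y.coeff a₂ else 0)
          = if a₂ = 0 then x.coeff 0 * y.coeff a₂ else 0 := by
        intro a₂ _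
        rw [zero_add]
      rw [Finset.sum_congr rfl this, Finset.sum_ite_eq' y.coeff.support 0 (fun a₂ => x.coeff 0 * y.coeff a₂)]
      by_cases h0 : (0 : G) ∈ y.coeff.support
      · rw [if_pos h0]
      · rw [if_neg h0, Finsupp.notMem_support_iff.mp h0, mul_zero]
    · rw [if_neg h]
      apply Finset.sum_eq_zero
      intro a₂ ha₂
      rw [if_neg]
      intro hc
      -- a₁ + a₂ = 0, a₁ ∈ S1 n nonzero so a₁ n ≠ 0; a₂ n = 0
      have ha₁n : a₁ n ≠ 0 := by
        intro h0
        apply h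
        funext j
        by_cases hj : j = n
        · rw [hj]; exact h0
        · exact hx ha₁ j hj
      have ha₂n : a₂ n = 0 := hy ha₂ n hn
      have : a₁ n + a₂ n = 0 := by
        rw [← Pi.add_apply, hc]; rfl
      omega
  rw [Finset.sum_congr rfl step1, Finset.sum_ite_eq' x.coeff.support 0 (fun _ => x.coeff 0 * y.coeff 0)]
  by_cases h0 : (0 : G) ∈ x.coeff.support
  · rw [if_pos h0]
  · rw [if_neg h0, Finsupp.notMem_support_iff.mp h0, zero_mul]

lemma prod_support_and_zero (N : ℕ) (s : Finset ℕ) :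
    ↑(∏ n ∈ s, (Bel n) ^ N).coeff.support ⊆ SS s
    ∧ (∏ n ∈ s, (Bel n) ^ N).coeff 0 = ∏ n ∈ s, ((Bel n) ^ N).coeff 0 := by
  classical
  induction s using Finset.induction with
  | empty =>
    constructor
    · simpa using one_mem_SS ∅
    · rw [Finset.prod_empty, Finset.prod_empty, AddMonoidAlgebra.one_def, AddMonoidAlgebra.coeff_single, Finsupp.single_eq_same]
  | insert _ _ hn =>
    rename_i n s ih
    rw [Finset.prod_insert hn, Finset.prod_insert hn]
    constructor
    · apply support_mul_subset (A := SS (insert n s)) SS_add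
      · exact (support_Bel_pow n N).trans (S1_subset_SS (Finset.mem_insert_self n s))
      · exact ih.1.trans (fun g hg j hj => hg j (fun hjs => hj (Finset.mem_insert_of_mem hjs)))
    · rw [mul_apply_zero hn (support_Bel_pow n N) ih.1, ih.2]

/-- coordinate character -/
def wCoord (n : ℕ) (u : ℝ) : G →+ ℝ :=
  AddMonoidHom.mk' (fun g => u * ((g n : ℤ) : ℝ)) (by
    intro a b
    show u * (((a + b) n : ℤ) : ℝ) = _
    rw [Pi.add_apply]
    push_cast
    ring)

lemma wCoord_apply (n : ℕ) (u : ℝ) (g : G) : wCoord n u g = u * ((g n : ℤ) : ℝ) := rfl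

lemma wCoord_e (n : ℕ) (u : ℝ) : wCoord n u (e n) = u := by
  rw [wCoord_apply, e, Pi.single_eq_same]
  norm_num

lemma Ev_wCoord_BelPow (n N : ℕ) (u : ℝ) :
    Ev (wCoord n u) ((Bel n) ^ N) = ((((1 + Real.sin u)/2)^N : ℝ) : ℂ) := by
  rw [map_pow, Ev_Bel, wCoord_e]
  push_cast
  ring

lemma BelPow_zero_coeff (n N : ℕ) :
    ((Bel n) ^ N).coeff 0
      = (((∫ u in (0:ℝ)..(2*Real.pi), ((1 + Real.sin u)/2)^N) / (2*Real.pi) : ℝ) : ℂ) := by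
  classical
  set W : R := (Bel n) ^ N with hW
  have key : ∫ u in (0:ℝ)..(2*Real.pi), Ev (wCoord n u) W = W.coeff 0 * (2*Real.pi) := by
    have hpt : ∀ u : ℝ, Ev (wCoord n u) W
        = ∑ g ∈ W.coeff.support, W.coeff g * Complex.exp ((Complex.I * ((g n : ℤ) : ℝ)) * u) := by
      intro u
      rw [Ev_apply]
      apply Finset.sum_congr rfl
      intro g _
      rw [wCoord_apply]
      congr 2
      push_cast
      ring
    rw [intervalIntegral.integral_congr (g := fun u => ∑ g ∈ W.coeff.support,
      W.coeff g * Complex.exp ((Complex.I * ((g n : ℤ) : ℝ)) * u)) (fun u _ => hpt u)]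
    rw [intervalIntegral.integral_finset_sum (fun g _ => by
      apply Continuous.intervalIntegrable
      exact continuous_const.mul (Complex.continuous_exp.comp (continuous_const.mul
        Complex.continuous_ofReal)))]
    have hterm : ∀ g ∈ W.coeff.support,
        (∫ u in (0:ℝ)..(2*Real.pi), W.coeff g * Complex.exp ((Complex.I * ((g n : ℤ) : ℝ)) * u))
        = if g = 0 then W.coeff g * (2*Real.pi) else 0 := by
      intro g hg
      rw [intervalIntegral.integral_const_mul]
      by_cases hgn : g n = 0
      · have hg0 : g = 0 := by
          funext j
          by_cases hj : j = n
          · rw [hj]; exact hgn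
          · exact support_Bel_pow n N hg j hj
        subst hg0
        rw [if_pos rfl]
        have hone : ∀ u : ℝ, Complex.exp ((Complex.I * (((0:G) n : ℤ) : ℝ)) * u) = 1 := by
          intro u; simp
        rw [intervalIntegral.integral_congr (g := fun _ => (1:ℂ)) (fun u _ => hone u),
          intervalIntegral.integral_const]
        norm_num [Complex.real_smul]
      · have hg0 : g ≠ 0 := by
          intro h; subst h; exact hgn rfl
        rw [if_neg hg0]
        have hc : (Complex.I * ((g n : ℤ) : ℝ)) ≠ 0 := by
          simp [Complex.I_ne_zero, Complex.ext_iff]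
          exact_mod_cast hgn
        rw [integral_exp_mul_complex hc]
        have h1 : Complex.exp (Complex.I * ((g n : ℤ) : ℝ) * ((2*Real.pi : ℝ) : ℂ)) = 1 := by
          rw [show Complex.I * ((g n : ℤ) : ℝ) * ((2*Real.pi : ℝ) : ℂ)
            = (g n : ℂ) * (2 * (Real.pi : ℂ) * Complex.I) from by push_cast; ring]
          exact Complex.exp_int_mul_two_pi_mul_I (g n)
        rw [h1]
        norm_num
    rw [Finset.sum_congr rfl hterm, Finset.sum_ite_eq' W.coeff.support 0 (fun g => W.coeff g * (2*Real.pi))]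
    by_cases h0 : (0 : G) ∈ W.coeff.support
    · rw [if_pos h0]
    · rw [if_neg h0, Finsupp.notMem_support_iff.mp h0, zero_mul]
  have key2 : ∫ u in (0:ℝ)..(2*Real.pi), Ev (wCoord n u) W
      = (((∫ u in (0:ℝ)..(2*Real.pi), ((1 + Real.sin u)/2)^N) : ℝ) : ℂ) := by
    rw [intervalIntegral.integral_congr (g := fun u => ((((1 + Real.sin u)/2)^N : ℝ) : ℂ))
      (fun u _ => Ev_wCoord_BelPow n N u)]
    exact intervalIntegral.integral_ofReal
  rw [key] at key2
  have hpi : (2*Real.pi : ℝ) ≠ 0 := by positivity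
  rw [Complex.ofReal_div]
  rw [eq_div_iff (by exact_mod_cast hpi)]
  push_cast
  exact key2

lemma integral_lower (N : ℕ) {η : ℝ} (hη : 0 < η) (hη1 : η ≤ 1/8) :
    2*η * ((1 + Real.cos η)/2)^N
      ≤ ∫ u in (0:ℝ)..(2*Real.pi), ((1 + Real.sin u)/2)^N := by
  have hpi : (3:ℝ) < Real.pi := Real.pi_gt_three
  have hf : Continuous (fun u : ℝ => ((1 + Real.sin u)/2)^N) := by
    continuity
  have hnn : ∀ u : ℝ, 0 ≤ ((1 + Real.sin u)/2)^N := by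
    intro u
    apply pow_nonneg
    nlinarith [Real.neg_one_le_sin u]
  have h1 : (0:ℝ) ≤ Real.pi/2 - η := by nlinarith
  have h2 : Real.pi/2 - η ≤ Real.pi/2 + η := by nlinarith
  have h3 : Real.pi/2 + η ≤ 2*Real.pi := by nlinarith
  have hsplit1 : ∫ u in (0:ℝ)..(2*Real.pi), ((1 + Real.sin u)/2)^N
      = (∫ u in (0:ℝ)..(Real.pi/2 - η), ((1 + Real.sin u)/2)^N)
      + (∫ u in (Real.pi/2 - η)..(2*Real.pi), ((1 + Real.sin u)/2)^N) := by
    rw [intervalIntegral.integral_add_adjacent_intervals] <;>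
      exact hf.intervalIntegrable _ _
  have hsplit2 : ∫ u in (Real.pi/2 - η)..(2*Real.pi), ((1 + Real.sin u)/2)^N
      = (∫ u in (Real.pi/2 - η)..(Real.pi/2 + η), ((1 + Real.sin u)/2)^N)
      + (∫ u in (Real.pi/2 + η)..(2*Real.pi), ((1 + Real.sin u)/2)^N) := by
    rw [intervalIntegral.integral_add_adjacent_intervals] <;>
      exact hf.intervalIntegrable _ _
  have hmid : 2*η * ((1 + Real.cos η)/2)^N
      ≤ ∫ u in (Real.pi/2 - η)..(Real.pi/2 + η), ((1 + Real.sin u)/2)^N := by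
    have hconst : ∫ _ in (Real.pi/2 - η)..(Real.pi/2 + η), ((1 + Real.cos η)/2)^N
        = 2*η * ((1 + Real.cos η)/2)^N := by
      rw [intervalIntegral.integral_const, smul_eq_mul]
      ring_nf
    rw [← hconst]
    apply intervalIntegral.integral_mono_on h2
    · exact intervalIntegrable_const
    · exact hf.intervalIntegrable _ _
    · intro u hu
      apply pow_le_pow_left₀ (by nlinarith [Real.neg_one_le_cos η])
      have hsin : Real.cos η ≤ Real.sin u := by
        rw [← Real.cos_pi_div_two_sub u, ← Real.cos_abs (Real.pi/2 - u)]
        apply Real.cos_le_cos_of_nonneg_of_le_pi (abs_nonneg _) (by nlinarith)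
        rw [abs_le]
        obtain ⟨hu1, hu2⟩ := hu
        constructor <;> nlinarith
      nlinarith
  have hleft : (0:ℝ) ≤ ∫ u in (0:ℝ)..(Real.pi/2 - η), ((1 + Real.sin u)/2)^N :=
    intervalIntegral.integral_nonneg h1 (fun u _ => hnn u)
  have hright : (0:ℝ) ≤ ∫ u in (Real.pi/2 + η)..(2*Real.pi), ((1 + Real.sin u)/2)^N :=
    intervalIntegral.integral_nonneg h3 (fun u _ => hnn u)
  linarith

/-- the time character -/
def wTime (s : Finset ℕ) (v : ℕ → ℝ) (t : ℝ) : G →+ ℝ :=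
  AddMonoidHom.mk' (fun g => (∑ n ∈ s, ((g n : ℤ) : ℝ) * v n) * t) (by
    intro a b
    show (∑ n ∈ s, (((a + b) n : ℤ) : ℝ) * v n) * t = _
    have : ∀ n ∈ s, (((a + b) n : ℤ) : ℝ) * v n
        = ((a n : ℤ) : ℝ) * v n + ((b n : ℤ) : ℝ) * v n := by
      intro n _
      rw [Pi.add_apply]
      push_cast
      ring
    rw [Finset.sum_congr rfl this, Finset.sum_add_distrib, add_mul])

lemma wTime_apply (s : Finset ℕ) (v : ℕ → ℝ) (t : ℝ) (g : G) :
    wTime s v t g = (∑ n ∈ s, ((g n : ℤ) : ℝ) * v n) * t := rfl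

lemma wTime_e {s : Finset ℕ} {n : ℕ} (hn : n ∈ s) (v : ℕ → ℝ) (t : ℝ) :
    wTime s v t (e n) = v n * t := by
  rw [wTime_apply]
  congr 1
  rw [Finset.sum_eq_single n]
  · rw [e, Pi.single_eq_same]; norm_num
  · intro j hj hjn
    rw [e, Pi.single_eq_of_ne hjn]
    norm_num
  · intro h; exact absurd hn h

open Filter in
lemma kronecker (s : Finset ℕ) (v : ℕ → ℝ)
    (hind : ∀ m : G, (∑ n ∈ s, ((m n : ℤ) : ℝ) * v n = 0) → ∀ n ∈ s, m n = 0) :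
    ∃ t : ℝ, ∀ n ∈ s, 0.99 ≤ Real.sin (v n * t) := by
  classical
  rcases s.eq_empty_or_nonempty with rfl | hne
  · exact ⟨0, by simp⟩
  by_contra hcon
  push_neg at hcon
  -- basic parameters
  set k : ℕ := s.card with hk
  have hk0 : 0 < k := Finset.card_pos.mpr hne
  have hk1 : (1:ℝ) ≤ k := by exact_mod_cast hk0
  set η : ℝ := 1/(8*k) with hη
  have hη0 : 0 < η := by positivity
  have hη1 : η ≤ 1/8 := by
    rw [hη]
    rw [div_le_div_iff₀ (by positivity) (by norm_num)]
    nlinarith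
  set ρ : ℝ := (1 + Real.cos η)/2 with hρ
  have hρ0 : 0 ≤ ρ := by
    have := Real.neg_one_le_cos η
    rw [hρ]; linarith
  have hρle1 : ρ ≤ 1 := by
    have := Real.cos_le_one η
    rw [hρ]; linarith
  have hρlb : 1 - η^2/4 ≤ ρ := by
    have := Real.one_sub_sq_div_two_le_cos (x := η)
    rw [hρ]; linarith
  have hρk : (0.996:ℝ) ≤ ρ^k := by
    have hb : 1 + (k:ℝ) * (-(η^2/4)) ≤ (1 + (-(η^2/4)))^k := by
      apply one_add_mul_le_pow
      nlinarith
    have h1 : (1 - η^2/4:ℝ)^k ≤ ρ^k := by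
      apply pow_le_pow_left₀ (by nlinarith) hρlb
    have h2 : (k:ℝ) * η^2 ≤ 1/64 := by
      have he : η^2 = 1/(64*(k:ℝ)^2) := by
        rw [hη]; field_simp; ring
      rw [he, mul_one_div, div_le_div_iff₀ (by positivity) (by norm_num)]
      nlinarith
    have h3 : (1:ℝ) - (k:ℝ)*η^2/4 ≤ (1 - η^2/4)^k := by
      calc (1:ℝ) - (k:ℝ)*η^2/4 = 1 + (k:ℝ) * (-(η^2/4)) := by ring
      _ ≤ (1 + (-(η^2/4)))^k := hb
      _ = (1 - η^2/4)^k := by ring_nf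
    nlinarith
  -- choose N
  obtain ⟨N, hN⟩ := ((tendsto_pow_atTop_atTop_of_one_lt
    (by norm_num : (1.001:ℝ) > 1)).eventually_gt_atTop ((Real.pi/η)^k)).exists
  -- γ : the common zero coefficient
  set γ : ℝ := (∫ u in (0:ℝ)..(2*Real.pi), ((1 + Real.sin u)/2)^N) / (2*Real.pi) with hγdef
  have hπ0 : (0:ℝ) < Real.pi := Real.pi_pos
  have hγlb : (η/Real.pi) * ρ^N ≤ γ := by
    have := integral_lower N hη0 hη1
    rw [hγdef, le_div_iff₀ (by positivity)]
    calc η/Real.pi * ρ^N * (2*Real.pi) = 2*η*ρ^N := by field_simp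
    _ ≤ _ := this
  have hρpos : 0 < ρ := by nlinarith
  have hγ0 : 0 < γ :=
    lt_of_lt_of_le (mul_pos (by positivity) (pow_pos hρpos N)) hγlb
  -- the product element and its zero coefficient
  set P : R := ∏ n ∈ s, (Bel n)^N with hPdef
  have hP0 : P.coeff 0 = ((γ^k : ℝ) : ℂ) := by
    rw [hPdef, (prod_support_and_zero N s).2]
    have : ∀ n ∈ s, ((Bel n)^N).coeff 0 = ((γ:ℝ):ℂ) := by
      intro n _
      rw [BelPow_zero_coeff n N, hγdef]
    rw [Finset.prod_congr rfl this, Finset.prod_const]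
    push_cast
    ring
  -- the real integrand
  set f : ℝ → ℝ := fun t => ∏ n ∈ s, ((1 + Real.sin (v n * t))/2)^N with hfdef
  have hfcont : Continuous f := by
    apply continuous_finset_prod
    intro n _
    fun_prop
  have hf0 : ∀ t, 0 ≤ f t := by
    intro t
    apply Finset.prod_nonneg
    intro n _
    apply pow_nonneg
    linarith [Real.neg_one_le_sin (v n * t)]
  have hfub : ∀ t, f t ≤ 0.995^N := by
    intro t
    obtain ⟨n0, hn0, hsin⟩ := hcon t
    have hft : f t = ∏ n ∈ s, ((1 + Real.sin (v n * t))/2)^N := rfl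
    rw [hft, ← Finset.mul_prod_erase s _ hn0]
    have h1 : ((1 + Real.sin (v n0 * t))/2)^N ≤ 0.995^N := by
      apply pow_le_pow_left₀ (by linarith [Real.neg_one_le_sin (v n0 * t)])
      linarith
    have h2 : ∏ n ∈ s.erase n0, ((1 + Real.sin (v n * t))/2)^N ≤ 1 := by
      apply Finset.prod_le_one
      · intro n _
        apply pow_nonneg
        linarith [Real.neg_one_le_sin (v n * t)]
      · intro n _
        apply pow_le_one₀
        · linarith [Real.neg_one_le_sin (v n * t)]
        · linarith [Real.sin_le_one (v n * t)]
    calc ((1 + Real.sin (v n0 * t))/2)^N * ∏ n ∈ s.erase n0, ((1 + Real.sin (v n * t))/2)^N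
        ≤ ((1 + Real.sin (v n0 * t))/2)^N * 1 := by
          apply mul_le_mul_of_nonneg_left h2
          apply pow_nonneg
          linarith [Real.neg_one_le_sin (v n0 * t)]
    _ = ((1 + Real.sin (v n0 * t))/2)^N := mul_one _
    _ ≤ 0.995^N := h1
  -- the evaluation identity
  have hEv : ∀ t : ℝ, Ev (wTime s v t) P = ((f t : ℝ) : ℂ) := by
    intro t
    rw [hPdef, map_prod, hfdef]
    push_cast
    apply Finset.prod_congr rfl
    intro n hn
    rw [map_pow, Ev_Bel, wTime_e hn]
    push_cast
    ring
  -- frequencies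
  set β : G → ℝ := fun g => ∑ n ∈ s, ((g n : ℤ) : ℝ) * v n with hβdef
  have hβne : ∀ g ∈ P.coeff.support, g ≠ 0 → β g ≠ 0 := by
    intro g hg hg0 hβ0
    apply hg0
    funext j
    by_cases hj : j ∈ s
    · exact hind g hβ0 j hj
    · exact (prod_support_and_zero N s).1 hg j hj
  -- expansion of the integral
  have hexp : ∀ T : ℝ, ((T:ℂ))⁻¹ * ∫ t in (0:ℝ)..T, ((f t : ℝ) : ℂ)
      = ∑ g ∈ P.coeff.support, P.coeff g * (((T:ℂ))⁻¹ * ∫ t in (0:ℝ)..T,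
          Complex.exp ((Complex.I * (β g)) * t)) := by
    intro T
    have hpt : ∀ t : ℝ, ((f t : ℝ) : ℂ)
        = ∑ g ∈ P.coeff.support, P.coeff g * Complex.exp ((Complex.I * (β g)) * t) := by
      intro t
      rw [← hEv t, Ev_apply]
      apply Finset.sum_congr rfl
      intro g _
      rw [wTime_apply]
      congr 2
      simp only [hβdef]
      push_cast
      ring
    rw [intervalIntegral.integral_congr (g := fun t => ∑ g ∈ P.coeff.support,
      P.coeff g * Complex.exp ((Complex.I * (β g)) * t)) (fun t _ => hpt t)]
    rw [intervalIntegral.integral_finset_sum (fun g _ => by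
      apply Continuous.intervalIntegrable
      exact continuous_const.mul (Complex.continuous_exp.comp (continuous_const.mul
        Complex.continuous_ofReal)))]
    rw [Finset.mul_sum]
    apply Finset.sum_congr rfl
    intro g _
    rw [intervalIntegral.integral_const_mul]
    ring
  -- the limit
  have hlim : Tendsto (fun T : ℝ => ((T:ℂ))⁻¹ * ∫ t in (0:ℝ)..T, ((f t : ℝ) : ℂ))
      atTop (nhds (P.coeff 0)) := by
    have hterm : ∀ g ∈ P.coeff.support, Tendsto (fun T : ℝ => P.coeff g * (((T:ℂ))⁻¹ *
        ∫ t in (0:ℝ)..T, Complex.exp ((Complex.I * (β g)) * t))) atTop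
        (nhds (if g = (0:G) then P.coeff 0 else 0)) := by
      intro g hg
      by_cases hg0 : g = 0
      · subst hg0
        rw [if_pos rfl]
        have hβ0 : β (0:G) = 0 := by
          rw [hβdef]
          apply Finset.sum_eq_zero
          intro n _
          norm_num
        apply Tendsto.congr' (f₁ := fun _ => P.coeff 0)
        · filter_upwards [eventually_gt_atTop (0:ℝ)] with T hT
          rw [hβ0]
          have : ∀ t : ℝ, Complex.exp ((Complex.I * ((0:ℝ):ℂ)) * t) = 1 := by
            intro t; norm_num
          rw [intervalIntegral.integral_congr (g := fun _ => (1:ℂ)) (fun t _ => this t),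
            intervalIntegral.integral_const]
          norm_num [Complex.real_smul]
          rw [inv_mul_cancel₀ (Complex.ofReal_ne_zero.mpr hT.ne'), mul_one]
        · exact tendsto_const_nhds
      · rw [if_neg hg0]
        have hβ : β g ≠ 0 := hβne g hg hg0
        have hc : (Complex.I * ((β g : ℝ):ℂ)) ≠ 0 := by
          simp [Complex.ext_iff, Complex.I_ne_zero]
          exact_mod_cast hβ
        have htend0 : Tendsto (fun T : ℝ => ‖P.coeff g‖ * (2/|β g|) * T⁻¹) atTop (nhds 0) := by
          simpa using tendsto_inv_atTop_zero.const_mul (‖P.coeff g‖ * (2/|β g|))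
        apply squeeze_zero_norm' _ htend0
        filter_upwards [eventually_gt_atTop (0:ℝ)] with T hT
        rw [integral_exp_mul_complex hc]
        have he : ∀ x : ℝ, ‖Complex.exp ((Complex.I * ((β g : ℝ):ℂ)) * ((x:ℝ):ℂ))‖ = 1 := by
          intro x
          rw [Complex.norm_exp]
          have : ((Complex.I * ((β g : ℝ):ℂ)) * ((x:ℝ):ℂ)).re = 0 := by
            simp [Complex.mul_re, Complex.mul_im]
          rw [this, Real.exp_zero]
        have hnum : ‖Complex.exp ((Complex.I * ((β g : ℝ):ℂ)) * ((T:ℝ):ℂ))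
            - Complex.exp ((Complex.I * ((β g : ℝ):ℂ)) * (((0:ℝ):ℝ):ℂ))‖ ≤ 2 := by
          apply le_trans (norm_sub_le _ _)
          rw [he T, he 0]
          norm_num
        have h2 : ‖(Complex.I * ((β g : ℝ):ℂ))‖ = |β g| := by
          rw [norm_mul, Complex.norm_I, one_mul,
            Complex.norm_real, Real.norm_eq_abs]
        have h3 : ‖((T:ℂ))⁻¹‖ = T⁻¹ := by
          rw [norm_inv, Complex.norm_real, Real.norm_eq_abs, abs_of_pos hT]
        have hb0 : (0:ℝ) < |β g| := abs_pos.mpr hβ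
        rw [norm_mul, norm_mul, norm_div, h2, h3]
        calc ‖P.coeff g‖ * (T⁻¹ * (‖Complex.exp ((Complex.I * ((β g : ℝ):ℂ)) * ((T:ℝ):ℂ))
              - Complex.exp ((Complex.I * ((β g : ℝ):ℂ)) * (((0:ℝ):ℝ):ℂ))‖ / |β g|))
            ≤ ‖P.coeff g‖ * (T⁻¹ * (2 / |β g|)) := by gcongr
        _ = ‖P.coeff g‖ * (2/|β g|) * T⁻¹ := by ring
    have hsum := tendsto_finset_sum P.coeff.support hterm
    have hval : ∑ g ∈ P.coeff.support, (if g = (0:G) then P.coeff 0 else 0) = P.coeff 0 := by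
      rw [Finset.sum_ite_eq' P.coeff.support (0:G) (fun _ => P.coeff 0)]
      by_cases h0 : (0:G) ∈ P.coeff.support
      · rw [if_pos h0]
      · rw [if_neg h0, Finsupp.notMem_support_iff.mp h0]
    have := hsum.congr (fun T => (hexp T).symm)
    rwa [hval] at this
  -- the bound
  have hub : ∀ᶠ T : ℝ in atTop, ‖((T:ℂ))⁻¹ * ∫ t in (0:ℝ)..T, ((f t : ℝ) : ℂ)‖ ≤ 0.995^N := by
    filter_upwards [eventually_ge_atTop (1:ℝ)] with T hT
    have hT0 : (0:ℝ) < T := lt_of_lt_of_le one_pos hT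
    rw [intervalIntegral.integral_ofReal, norm_mul, norm_inv, Complex.norm_real,
      Complex.norm_real, Real.norm_eq_abs, Real.norm_eq_abs, abs_of_pos hT0]
    have hInt0 : 0 ≤ ∫ t in (0:ℝ)..T, f t :=
      intervalIntegral.integral_nonneg hT0.le (fun t _ => hf0 t)
    rw [abs_of_nonneg hInt0]
    have hIntUb : ∫ t in (0:ℝ)..T, f t ≤ T * 0.995^N := by
      have hcon2 : ∫ _ in (0:ℝ)..T, (0.995:ℝ)^N = T * 0.995^N := by
        rw [intervalIntegral.integral_const, smul_eq_mul, sub_zero]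
      rw [← hcon2]
      exact intervalIntegral.integral_mono_on hT0.le (hfcont.intervalIntegrable _ _)
        intervalIntegrable_const (fun t _ => hfub t)
    calc T⁻¹ * ∫ t in (0:ℝ)..T, f t ≤ T⁻¹ * (T * 0.995^N) := by
          apply mul_le_mul_of_nonneg_left hIntUb (by positivity)
    _ = 0.995^N := by field_simp
  have hnorm : ‖P.coeff 0‖ ≤ 0.995^N := le_of_tendsto hlim.norm hub
  rw [hP0, Complex.norm_real, Real.norm_eq_abs, abs_of_nonneg (by positivity)] at hnorm
  -- numeric contradiction
  have hA0 : (0:ℝ) < (Real.pi/η)^k := by positivity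
  have hstep1 : ((Real.pi/η)^k)⁻¹ * 0.996^N ≤ γ^k := by
    calc ((Real.pi/η)^k)⁻¹ * 0.996^N = (η/Real.pi)^k * 0.996^N := by
          rw [← inv_pow, inv_div]
    _ ≤ (η/Real.pi)^k * (ρ^k)^N := by
          apply mul_le_mul_of_nonneg_left _ (by positivity)
          exact pow_le_pow_left₀ (by norm_num) hρk N
    _ = ((η/Real.pi) * ρ^N)^k := by rw [mul_pow, ← pow_mul, ← pow_mul, Nat.mul_comm]
    _ ≤ γ^k := pow_le_pow_left₀ (by positivity) hγlb k
  have hstep2 : (0.995:ℝ)^N < ((Real.pi/η)^k)⁻¹ * 0.996^N := by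
    rw [inv_mul_eq_div, lt_div_iff₀ hA0]
    calc (0.995:ℝ)^N * (Real.pi/η)^k < 0.995^N * 1.001^N := by
          apply mul_lt_mul_of_pos_left hN (by positivity)
    _ = (0.995*1.001:ℝ)^N := by rw [← mul_pow]
    _ ≤ 0.996^N := pow_le_pow_left₀ (by norm_num) (by norm_num) N
  linarith

end

end Stmt16Aux


open Stmt16Aux in
theorem stmt16 (α : ℝ) (hα : 0 < α) (hrat : ∃ q : ℚ, (q : ℝ) = α)
    (hnotint : ¬ ∃ m : ℕ, (m : ℝ) = α) :
    ∃ L₀ : ℕ, ∀ L : ℕ, L₀ ≤ L →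
      ∃ x₀ : ℝ, ∀ n : ℕ, 0 < n → n ≤ L → Squarefree n →
        0.99 ≤ Real.sin ((n : ℝ) ^ α * x₀) := by
  classical
  obtain ⟨q, hq⟩ := hrat
  have hq0 : 0 < q := by
    rw [← Rat.cast_pos (K := ℝ), hq]
    exact hα
  have hnum : 0 < q.num := Rat.num_pos.mpr hq0
  set a : ℕ := q.num.toNat with hadef
  set b : ℕ := q.den with hbdef
  have ha0 : 0 < a := by omega
  have hanum : (a : ℤ) = q.num := by omega
  have hb2 : 2 ≤ b := by
    rcases Nat.lt_or_ge b 2 with h | h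
    · exfalso
      have hb1 : q.den = 1 := by
        have := q.pos
        omega
      apply hnotint
      refine ⟨a, ?_⟩
      rw [← hq, Rat.cast_def, hb1]
      rw [← hanum]
      push_cast
      norm_num
    · exact h
  have hab : Nat.Coprime a b := by
    have := q.reduced
    have hnatabs : q.num.natAbs = a := by omega
    rwa [hnatabs] at this
  have hαab : α = (a : ℝ) / (b : ℝ) := by
    rw [← hq, Rat.cast_def, hbdef]
    congr 1
    exact_mod_cast congrArg (fun z : ℤ => (z : ℝ)) hanum.symm
  refine ⟨0, fun L _ => ?_⟩
  set s : Finset ℕ := Finset.filter (fun n => Squarefree n) (Finset.range (L+1)) with hsdef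
  have hsq : ∀ n ∈ s, Squarefree n := fun n hn => (Finset.mem_filter.mp hn).2
  obtain ⟨t, ht⟩ := kronecker s (fun n => (n : ℝ) ^ α) (by
    intro m hrel n hn
    apply indep_sqfree ha0 hb2 hab s hsq m _ n hn
    rw [← hαab]
    exact hrel)
  refine ⟨t, fun n hn0 hnL hnsq => ?_⟩
  exact ht n (Finset.mem_filter.mpr ⟨Finset.mem_range.mpr (by omega), hnsq⟩)
end
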